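/- arXiv:2002.12733 — 6 statements merged into one kernel-verified Lean document; each statement's English description precedes it below -/
import Mathlib

section
/- There is an absolute constant C (not depending on m, M, n) such that: if V_n ∈ L_n(m,M) and n is sufficiently large, then V_n is invertible and max_{i,j} |(V_n^{−1})_{ij} − s̄_{ij}| ≤ C M²/(m³(n−1)²), where s̄_{ij} = δ_{ij}/v_{ii} − 1/v_{··} and v_{··} = Σ_{i=1}^n v_{ii}. -/
/-!
Write `V = D + W` with `D` the diagonal part. Iterating the resolvent identity gives
`V⁻¹ = D⁻¹ - D⁻¹ W D⁻¹ + D⁻¹ (W V⁻¹ W) D⁻¹`, so `V⁻¹ - s̄` is the sum of `-D⁻¹ W D⁻¹`,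
`D⁻¹ (W V⁻¹ W) D⁻¹` and `1 / v_{··}`. The diagonal entries are at least `m (n - 1)`, which makes the
first and last terms small. For the middle one, `V` is the signless Laplacian of the complete graph
with weights `v_{ij}`: `2 xᵀ V x = Σ_{i ≠ j} v_{ij} (x_i + x_j)² ≥ 2 m (n - 2) |x|²`, hence
`|uᵀ V⁻¹ w| ≤ |u| |w| / (m (n - 2))`, and the rows of `W` have squared norm at most `(n - 1) M²`.
-/

open Finset

/-- The matrix class `L_n(m, M)`: symmetric nonnegative matrices whose diagonal entries equal
the corresponding off-diagonal row sums, with all off-diagonal entries in `[m, M]`. -/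
def MatrixClassL (n : ℕ) (m M : ℝ) (V : Matrix (Fin n) (Fin n) ℝ) : Prop :=
  V.IsSymm ∧ (∀ i, V i i = ∑ j ∈ Finset.univ.erase i, V i j) ∧
    ∀ i j, i ≠ j → m ≤ V i j ∧ V i j ≤ M

open Matrix

section SignlessLaplacian

variable {ι : Type*} [Fintype ι] [DecidableEq ι]

theorem sum_sum_erase_comm {β : Type*} [AddCommMonoid β] (f : ι → ι → β) :
    ∑ i, ∑ j ∈ univ.erase i, f i j = ∑ i, ∑ j ∈ univ.erase i, f j i :=
  Finset.sum_comm' fun _ _ => by simp [ne_comm]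

theorem two_mul_dotProduct_mulVec_eq {V : Matrix ι ι ℝ} (hsymm : V.IsSymm)
    (hdiag : ∀ i, V i i = ∑ j ∈ univ.erase i, V i j) (x : ι → ℝ) :
    2 * (x ⬝ᵥ V *ᵥ x) = ∑ i, ∑ j ∈ univ.erase i, V i j * (x i + x j) ^ 2 := by
  have hrow : ∀ i, x i * (V *ᵥ x) i =
      ∑ j ∈ univ.erase i, (V i j * x i ^ 2 + V i j * x i * x j) := by
    intro i
    rw [mulVec, dotProduct, ← add_sum_erase _ _ (mem_univ i), hdiag i, sum_mul,
      ← sum_add_distrib, mul_sum]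
    exact sum_congr rfl fun j _ => by ring
  have hswap : ∑ i, ∑ j ∈ univ.erase i, V i j * x j ^ 2 =
      ∑ i, ∑ j ∈ univ.erase i, V i j * x i ^ 2 := by
    rw [sum_sum_erase_comm]
    simp only [hsymm.apply]
  calc 2 * (x ⬝ᵥ V *ᵥ x)
      = ∑ i, ∑ j ∈ univ.erase i, V i j * x i ^ 2 + ∑ i, ∑ j ∈ univ.erase i, V i j * x j ^ 2
        + 2 * ∑ i, ∑ j ∈ univ.erase i, V i j * x i * x j := by
        rw [hswap, dotProduct]
        simp only [hrow, sum_add_distrib]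
        ring
    _ = _ := by
        simp only [mul_sum, ← sum_add_distrib]
        exact sum_congr rfl fun i _ => sum_congr rfl fun j _ => by ring

theorem sum_sum_erase_add_sq (x : ι → ℝ) :
    ∑ i, ∑ j ∈ univ.erase i, (x i + x j) ^ 2
      = 2 * (Fintype.card ι - 2) * (x ⬝ᵥ x) + 2 * (∑ i, x i) ^ 2 := by
  have hrow : ∀ i, ∑ j ∈ univ.erase i, (x i + x j) ^ 2
      = (Fintype.card ι - 4) * x i ^ 2 + 2 * (∑ j, x j) * x i + x ⬝ᵥ x := by
    intro i
    rw [sum_erase_eq_sub (mem_univ i), dotProduct]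
    simp only [add_sq, sum_add_distrib, sum_const, card_univ, nsmul_eq_mul, ← mul_sum]
    simp only [sq, mul_comm (x i)]
    ring
  rw [sum_congr rfl fun i _ => hrow i]
  simp only [sum_add_distrib, sum_const, card_univ, nsmul_eq_mul, ← mul_sum, dotProduct, sq]
  ring

theorem mul_card_sub_two_mul_dotProduct_self_le {V : Matrix ι ι ℝ} {m : ℝ} (hm : 0 ≤ m)
    (hsymm : V.IsSymm) (hdiag : ∀ i, V i i = ∑ j ∈ univ.erase i, V i j)
    (hoff : ∀ i j, i ≠ j → m ≤ V i j) (x : ι → ℝ) :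
    m * (Fintype.card ι - 2) * (x ⬝ᵥ x) ≤ x ⬝ᵥ V *ᵥ x := by
  have hlower : m * ∑ i, ∑ j ∈ univ.erase i, (x i + x j) ^ 2 ≤ 2 * (x ⬝ᵥ V *ᵥ x) := by
    rw [two_mul_dotProduct_mulVec_eq hsymm hdiag, mul_sum]
    refine sum_le_sum fun i _ => ?_
    rw [mul_sum]
    exact sum_le_sum fun j hj =>
      mul_le_mul_of_nonneg_right (hoff i j (ne_of_mem_erase hj).symm) (sq_nonneg _)
  rw [sum_sum_erase_add_sq] at hlower
  nlinarith [mul_nonneg hm (sq_nonneg (∑ i, x i))]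

end SignlessLaplacian

section Coercive

variable {ι : Type*} [Fintype ι]

theorem sq_dotProduct_le_mul (u v : ι → ℝ) : (u ⬝ᵥ v) ^ 2 ≤ (u ⬝ᵥ u) * (v ⬝ᵥ v) := by
  simpa only [dotProduct, sq] using sum_mul_sq_le_sq_mul_sq univ u v

theorem dotProduct_self_nonneg (v : ι → ℝ) : 0 ≤ v ⬝ᵥ v :=
  sum_nonneg fun i _ => mul_self_nonneg (v i)

variable {V : Matrix ι ι ℝ} {c : ℝ}

theorem sq_mul_dotProduct_self_le_of_coercive (hc : 0 ≤ c)
    (hV : ∀ x, c * (x ⬝ᵥ x) ≤ x ⬝ᵥ V *ᵥ x) (y : ι → ℝ) :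
    c ^ 2 * (y ⬝ᵥ y) ≤ (V *ᵥ y) ⬝ᵥ (V *ᵥ y) := by
  rcases (dotProduct_self_nonneg y).eq_or_lt with hy | hy
  · rw [← hy, mul_zero]
    exact dotProduct_self_nonneg _
  · refine le_of_mul_le_mul_right ?_ hy
    calc c ^ 2 * (y ⬝ᵥ y) * (y ⬝ᵥ y) = (c * (y ⬝ᵥ y)) ^ 2 := by ring
      _ ≤ (y ⬝ᵥ V *ᵥ y) ^ 2 := pow_le_pow_left₀ (by positivity) (hV y) 2
      _ ≤ (V *ᵥ y) ⬝ᵥ (V *ᵥ y) * (y ⬝ᵥ y) := by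
        rw [mul_comm]; exact sq_dotProduct_le_mul y (V *ᵥ y)

variable [DecidableEq ι]

theorem isUnit_det_of_coercive (hc : 0 < c) (hV : ∀ x, c * (x ⬝ᵥ x) ≤ x ⬝ᵥ V *ᵥ x) :
    IsUnit V.det := by
  rw [← isUnit_iff_isUnit_det, ← mulVec_injective_iff_isUnit]
  intro a b hab
  have h := sq_mul_dotProduct_self_le_of_coercive hc.le hV (a - b)
  rw [mulVec_sub, hab, sub_self, dotProduct_zero] at h
  have h0 : (a - b) ⬝ᵥ (a - b) = 0 :=
    le_antisymm (nonpos_of_mul_nonpos_right h (by positivity)) (dotProduct_self_nonneg _)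
  exact sub_eq_zero.mp (dotProduct_self_eq_zero.mp h0)

theorem sq_mul_sq_dotProduct_inv_mulVec_le (hc : 0 < c)
    (hV : ∀ x, c * (x ⬝ᵥ x) ≤ x ⬝ᵥ V *ᵥ x) (u w : ι → ℝ) :
    c ^ 2 * (u ⬝ᵥ V⁻¹ *ᵥ w) ^ 2 ≤ (u ⬝ᵥ u) * (w ⬝ᵥ w) := by
  have hVV : V *ᵥ V⁻¹ *ᵥ w = w := by
    rw [mulVec_mulVec, mul_nonsing_inv V (isUnit_det_of_coercive hc hV), one_mulVec]
  have h := sq_mul_dotProduct_self_le_of_coercive hc.le hV (V⁻¹ *ᵥ w)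
  rw [hVV] at h
  calc c ^ 2 * (u ⬝ᵥ V⁻¹ *ᵥ w) ^ 2 ≤ c ^ 2 * ((u ⬝ᵥ u) * (V⁻¹ *ᵥ w ⬝ᵥ V⁻¹ *ᵥ w)) := by
        gcongr; exact sq_dotProduct_le_mul _ _
    _ = (u ⬝ᵥ u) * (c ^ 2 * (V⁻¹ *ᵥ w ⬝ᵥ V⁻¹ *ᵥ w)) := by ring
    _ ≤ (u ⬝ᵥ u) * (w ⬝ᵥ w) := by gcongr; exact dotProduct_self_nonneg u

end Coercive

/-- The resolvent identity `b = e - e w b` for `b = (d + w)⁻¹`, `e = d⁻¹`, iterated once. -/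
theorem eq_sub_add_of_mul_eq_one {R : Type*} [Ring R] {a b d e w : R} (hab : a * b = 1)
    (hba : b * a = 1) (hde : d * e = 1) (hed : e * d = 1) (ha : a = d + w) :
    b = e - e * w * e + e * (w * b * w) * e := by
  have hleft : b = e - b * w * e := by
    rw [eq_sub_iff_add_eq]
    calc b + b * w * e = b * (d + w) * e := by rw [mul_add, add_mul, mul_assoc b d, hde, mul_one]
      _ = e := by rw [← ha, hba, one_mul]
  have hright : b = e - e * w * b := by
    rw [eq_sub_iff_add_eq]
    calc b + e * w * b = e * (d + w) * b := by rw [mul_add, add_mul, hed, one_mul]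
      _ = e := by rw [← ha, mul_assoc, hab, mul_one]
  conv_lhs => rw [hleft, hright]
  noncomm_ring

namespace Matrix

variable {ι K : Type*} [DecidableEq ι] [Field K]

def offDiag (V : Matrix ι ι K) : Matrix ι ι K := V - diagonal V.diag

theorem offDiag_apply (V : Matrix ι ι K) (i j : ι) :
    V.offDiag i j = if i = j then 0 else V i j := by
  by_cases h : i = j <;> simp [offDiag, h]

theorem transpose_offDiag (V : Matrix ι ι K) : V.offDiagᵀ = Vᵀ.offDiag := by
  simp [offDiag]

variable [Fintype ι]

theorem inv_apply_eq_of_diag_ne_zero {V : Matrix ι ι K} (hV : IsUnit V.det)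
    (hdiag : ∀ i, V i i ≠ 0) (i j : ι) :
    V⁻¹ i j = (if i = j then (V i i)⁻¹ else 0) +
      (V i i)⁻¹ * ((V.offDiag * V⁻¹ * V.offDiag) i j - V.offDiag i j) * (V j j)⁻¹ := by
  have hDE : diagonal V.diag * diagonal V.diag⁻¹ = 1 := by
    rw [diagonal_mul_diagonal, ← diagonal_one]
    exact congrArg diagonal (funext fun k => mul_inv_cancel₀ (hdiag k))
  have hED : diagonal V.diag⁻¹ * diagonal V.diag = 1 := by
    rw [diagonal_mul_diagonal, ← diagonal_one]
    exact congrArg diagonal (funext fun k => inv_mul_cancel₀ (hdiag k))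
  have hVDW : V = diagonal V.diag + V.offDiag := (add_sub_cancel _ V).symm
  have h := congrFun₂ (eq_sub_add_of_mul_eq_one (R := Matrix ι ι K) (mul_nonsing_inv V hV)
    (nonsing_inv_mul V hV) hDE hED hVDW) i j
  simp only [Matrix.sub_apply, Matrix.add_apply, mul_diagonal, diagonal_mul, diagonal_apply,
    Pi.inv_apply, diag_apply] at h
  rw [h]
  ring

end Matrix

theorem Fin.cast_card_erase_univ {n : ℕ} (i : Fin n) : ((univ.erase i).card : ℝ) = n - 1 := by
  rw [card_erase_of_mem (mem_univ i), card_univ, Fintype.card_fin, Nat.cast_pred i.pos]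

namespace MatrixClassL

variable {n : ℕ} {m M : ℝ} {V : Matrix (Fin n) (Fin n) ℝ}

theorem mul_le_diag (hV : MatrixClassL n m M V) (i : Fin n) : m * (n - 1) ≤ V i i := by
  rw [hV.2.1 i, ← Fin.cast_card_erase_univ i, mul_comm, ← nsmul_eq_mul]
  exact card_nsmul_le_sum _ _ _ fun j hj => (hV.2.2 i j (ne_of_mem_erase hj).symm).1

theorem mul_le_sum_diag (hV : MatrixClassL n m M V) : m * (n * (n - 1)) ≤ ∑ k, V k k := by
  calc m * (n * (n - 1)) = (univ : Finset (Fin n)).card • (m * (n - 1)) := by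
        rw [card_univ, Fintype.card_fin, nsmul_eq_mul]; ring
    _ ≤ ∑ k, V k k := card_nsmul_le_sum _ _ _ fun k _ => hV.mul_le_diag k

theorem mul_sub_two_mul_dotProduct_self_le (hV : MatrixClassL n m M V) (hm : 0 ≤ m)
    (x : Fin n → ℝ) :
    m * (n - 2) * (x ⬝ᵥ x) ≤ x ⬝ᵥ V *ᵥ x := by
  simpa using mul_card_sub_two_mul_dotProduct_self_le hm hV.1 hV.2.1
    (fun i j h => (hV.2.2 i j h).1) x

theorem abs_offDiag_apply_le (hV : MatrixClassL n m M V) (hm : 0 ≤ m) (hmM : m ≤ M)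
    (i j : Fin n) : |V.offDiag i j| ≤ M := by
  rw [offDiag_apply]
  split_ifs with h
  · simpa using hm.trans hmM
  · exact abs_le.mpr ⟨by linarith [(hV.2.2 i j h).1], (hV.2.2 i j h).2⟩

theorem row_dotProduct_self_le (hV : MatrixClassL n m M V) (hm : 0 ≤ m) (hmM : m ≤ M)
    (i : Fin n) :
    V.offDiag i ⬝ᵥ V.offDiag i ≤ (n - 1) * M ^ 2 := by
  rw [dotProduct, ← add_sum_erase _ _ (mem_univ i), ← Fin.cast_card_erase_univ i, ← nsmul_eq_mul]
  rw [offDiag_apply, if_pos rfl, zero_mul, zero_add]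
  refine sum_le_card_nsmul _ _ _ fun k _ => ?_
  rw [← sq, ← sq_abs]
  exact pow_le_pow_left₀ (abs_nonneg _) (hV.abs_offDiag_apply_le hm hmM i k) 2

theorem isUnit_det (hV : MatrixClassL n m M V) (hn : 3 ≤ n) (hm : 0 < m) : IsUnit V.det := by
  have hn' : (3 : ℝ) ≤ n := by exact_mod_cast hn
  exact isUnit_det_of_coercive (mul_pos hm (by linarith))
    (hV.mul_sub_two_mul_dotProduct_self_le hm.le)

theorem abs_offDiag_mul_inv_mul_offDiag_apply_le (hV : MatrixClassL n m M V) (hn : 3 ≤ n)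
    (hm : 0 < m) (hmM : m ≤ M) (i j : Fin n) :
    |(V.offDiag * V⁻¹ * V.offDiag) i j| ≤ 2 * M ^ 2 / m := by
  set W := V.offDiag
  have hn' : (3 : ℝ) ≤ n := by exact_mod_cast hn
  have hc : 0 < m * (n - 2) := mul_pos hm (by linarith)
  have hWT : Wᵀ = W := by rw [transpose_offDiag, hV.1.eq]
  have hrow : (n - 1) * M ^ 2 ≤ (n - 2) * (2 * M ^ 2) := by nlinarith [sq_nonneg M]
  have hsq : (m * (n - 2) * (W * V⁻¹ * W) i j) ^ 2 ≤ ((n - 2) * (2 * M ^ 2)) ^ 2 :=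
    calc (m * (n - 2) * (W * V⁻¹ * W) i j) ^ 2
        = (m * (n - 2)) ^ 2 * (W i ⬝ᵥ V⁻¹ *ᵥ W j) ^ 2 := by rw [mul_mul_apply, hWT]; ring
      _ ≤ (W i ⬝ᵥ W i) * (W j ⬝ᵥ W j) :=
        sq_mul_sq_dotProduct_inv_mulVec_le hc (hV.mul_sub_two_mul_dotProduct_self_le hm.le) _ _
      _ ≤ ((n - 1) * M ^ 2) * ((n - 1) * M ^ 2) :=
        mul_le_mul (hV.row_dotProduct_self_le hm.le hmM i) (hV.row_dotProduct_self_le hm.le hmM j)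
          (dotProduct_self_nonneg _) (by nlinarith [sq_nonneg M])
      _ ≤ ((n - 2) * (2 * M ^ 2)) ^ 2 := by
        rw [← sq]; exact pow_le_pow_left₀ (by nlinarith [sq_nonneg M]) hrow 2
  have habs := abs_le_of_sq_le_sq hsq (mul_nonneg (by linarith) (by positivity))
  rw [abs_mul, abs_of_pos hc] at habs
  rw [le_div_iff₀ hm]
  exact le_of_mul_le_mul_left (by linarith) (by linarith : (0 : ℝ) < n - 2)

theorem abs_inv_apply_sub_le (hV : MatrixClassL n m M V) (hn : 3 ≤ n) (hm : 0 < m)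
    (hmM : m ≤ M) (i j : Fin n) :
    |V⁻¹ i j - ((if i = j then (V i i)⁻¹ else 0) - (∑ k, V k k)⁻¹)|
      ≤ 4 * M ^ 2 / (m ^ 3 * ((n : ℝ) - 1) ^ 2) := by
  set W := V.offDiag
  have hn' : (3 : ℝ) ≤ n := by exact_mod_cast hn
  have hdiag : 0 < m * (n - 1) := mul_pos hm (by linarith)
  have hdiag_pos : ∀ k, 0 < V k k := fun k => hdiag.trans_le (hV.mul_le_diag k)
  have hinv_diag : ∀ k, (V k k)⁻¹ ≤ (m * (n - 1))⁻¹ := fun k => inv_anti₀ hdiag (hV.mul_le_diag k)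
  have hinv_diag_pos : ∀ k, 0 < (V k k)⁻¹ := fun k => inv_pos.mpr (hdiag_pos k)
  have htrace : 0 < m * (n * (n - 1)) := mul_pos hm (mul_pos (by linarith) (by linarith))
  have hinv_trace : (∑ k, V k k)⁻¹ ≤ (m * (n * (n - 1)))⁻¹ :=
    inv_anti₀ htrace hV.mul_le_sum_diag
  have hinv_trace_pos : 0 < (∑ k, V k k)⁻¹ :=
    inv_pos.mpr (htrace.trans_le hV.mul_le_sum_diag)
  have hcorr : |(W * V⁻¹ * W) i j - W i j| ≤ 3 * M ^ 2 / m := by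
    have hM : M ≤ M ^ 2 / m := by rw [le_div_iff₀ hm]; nlinarith
    calc |(W * V⁻¹ * W) i j - W i j| ≤ |(W * V⁻¹ * W) i j| + |W i j| := abs_sub _ _
      _ ≤ 2 * M ^ 2 / m + M ^ 2 / m := add_le_add
          (hV.abs_offDiag_mul_inv_mul_offDiag_apply_le hn hm hmM i j)
          ((hV.abs_offDiag_apply_le hm.le hmM i j).trans hM)
      _ = 3 * M ^ 2 / m := by ring
  have hsplit : V⁻¹ i j - ((if i = j then (V i i)⁻¹ else 0) - (∑ k, V k k)⁻¹)
      = (V i i)⁻¹ * ((W * V⁻¹ * W) i j - W i j) * (V j j)⁻¹ + (∑ k, V k k)⁻¹ := by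
    rw [inv_apply_eq_of_diag_ne_zero (hV.isUnit_det hn hm) fun k => (hdiag_pos k).ne']
    ring
  rw [hsplit]
  calc _ ≤ |(V i i)⁻¹ * ((W * V⁻¹ * W) i j - W i j) * (V j j)⁻¹| + (∑ k, V k k)⁻¹ := by
        refine (abs_add_le _ _).trans_eq ?_
        rw [abs_of_pos hinv_trace_pos]
    _ ≤ (m * (n - 1))⁻¹ * (3 * M ^ 2 / m) * (m * (n - 1))⁻¹ + (m * (n * (n - 1)))⁻¹ := by
        rw [abs_mul, abs_mul, abs_of_pos (hinv_diag_pos i), abs_of_pos (hinv_diag_pos j)]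
        gcongr ?_ * ?_ * ?_ + ?_
        exacts [(hinv_diag_pos j).le, hinv_diag i, hinv_diag j]
    _ ≤ 3 * M ^ 2 / (m ^ 3 * ((n : ℝ) - 1) ^ 2) + M ^ 2 / (m ^ 3 * ((n : ℝ) - 1) ^ 2) := by
        have hmain : (m * (n - 1))⁻¹ * (3 * M ^ 2 / m) * (m * (n - 1))⁻¹
            = 3 * M ^ 2 / (m ^ 3 * ((n : ℝ) - 1) ^ 2) := by
          field_simp
        have hmM2 : m ^ 2 * (n - 1) ≤ M ^ 2 * n :=
          mul_le_mul (pow_le_pow_left₀ hm.le hmM 2) (by linarith) (by linarith) (by positivity)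
        rw [hmain, add_le_add_iff_left, inv_eq_one_div,
          div_le_div_iff₀ htrace (mul_pos (pow_pos hm 3) (pow_pos (by linarith) 2))]
        nlinarith [mul_le_mul_of_nonneg_left hmM2 hdiag.le]
    _ = 4 * M ^ 2 / (m ^ 3 * ((n : ℝ) - 1) ^ 2) := by ring

end MatrixClassL

/-- There is an absolute constant `C` (independent of `m`, `M`, `n`) such that
for all sufficiently large `n`, every `V ∈ L_n(m,M)` is invertible and
`max_{i,j} |(V⁻¹)_{ij} - s̄_{ij}| ≤ C M²/(m³ (n-1)²)`, where
`s̄_{ij} = δ_{ij}/v_{ii} - 1/v_{··}` and `v_{··} = Σ_i v_{ii}`. -/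
theorem inverse_approximation_Ln :
    ∃ C : ℝ, 0 < C ∧ ∃ N : ℕ, ∀ n : ℕ, N ≤ n →
      ∀ m M : ℝ, 0 < m → m ≤ M →
      ∀ V : Matrix (Fin n) (Fin n) ℝ, MatrixClassL n m M V →
        IsUnit V.det ∧
        ∀ i j : Fin n,
          |V⁻¹ i j - ((if i = j then (V i i)⁻¹ else 0) - (∑ k, V k k)⁻¹)|
            ≤ C * M ^ 2 / (m ^ 3 * ((n : ℝ) - 1) ^ 2) :=
  ⟨4, by norm_num, 3, fun _ hn _ _ hm hmM _ hV =>
    ⟨hV.isUnit_det hn hm, hV.abs_inv_apply_sub_le hn hm hmM⟩⟩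
end

section
/- In the generalized β-model with the discrete Laplace mechanism (λ_n = exp(−ε_n/2)), if ε_n = Ω(√(log n)) (specifically ε_n ≥ c√(log n) with c ≥ 4), then with probability approaching one as n → ∞, max_{1≤i≤n} |d̄_i − E(d_i)| ≤ 2(q−1)√((n−1) log(n−1)). -/
/-!
Split the threshold `2(q-1)√((n-1) log(n-1))` evenly between the centred degree and the noise.
The degree `d_i` is a sum of `n - 1` independent variables with values in `[0, q - 1]`, so by
Hoeffding's inequality `|d_i - E d_i|` reaches half the threshold with probability at most
`2/(n-1)²`. A discrete Laplace variable exceeds `u` in absolute value with probability at most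
`2λ^u`, and `ε_n ≥ 4√(log n)` makes this at most `2/(n-1)²` as well. A union bound over the `n`
vertices leaves a failure probability of order `1/n`.
-/

open MeasureTheory ProbabilityTheory Filter

/-- Probability mass function of the discrete Laplace distribution with parameter `lam`. -/
noncomputable def discreteLaplacePMF (lam : ℝ) (z : ℤ) : ℝ :=
  (1 - lam) / (1 + lam) * lam ^ z.natAbs

open Finset Real Topology

lemma sum_Icc_discreteLaplacePMF {lam : ℝ} (hlam : 1 + lam ≠ 0) (K : ℕ) :
    ∑ z ∈ Icc (-K : ℤ) K, discreteLaplacePMF lam z = 1 - 2 * lam ^ (K + 1) / (1 + lam) := by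
  induction K with
  | zero =>
    simp only [CharP.cast_eq_zero, neg_zero, Icc_self, sum_singleton, discreteLaplacePMF,
      Int.natAbs_zero, pow_zero, mul_one, zero_add, pow_one]
    field_simp
    ring
  | succ K ih =>
    have hIcc : Icc (-(K + 1 : ℕ) : ℤ) (K + 1 : ℕ)
        = insert (-(K + 1 : ℤ)) (insert (K + 1 : ℤ) (Icc (-K : ℤ) K)) := by
      ext z; simp only [mem_Icc, mem_insert]; omega
    rw [hIcc, sum_insert (by simp only [mem_insert, mem_Icc]; omega),
      sum_insert (by simp only [mem_Icc]; omega), ih]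
    simp only [discreteLaplacePMF]
    rw [show (-(K + 1 : ℤ)).natAbs = K + 1 by omega, show (K + 1 : ℤ).natAbs = K + 1 by omega]
    field_simp
    ring

lemma tendsto_measure_one_of_measureReal_compl_le {Ω : ℕ → Type*} [∀ n, MeasurableSpace (Ω n)]
    {μ : ∀ n, Measure (Ω n)} [∀ n, IsProbabilityMeasure (μ n)] {A : ∀ n, Set (Ω n)}
    {δ : ℕ → ℝ} (hδ : Tendsto δ atTop (𝓝 0)) (h : ∀ᶠ n in atTop, (μ n).real (A n)ᶜ ≤ δ n) :
    Tendsto (fun n => μ n (A n)) atTop (𝓝 1) := by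
  have hlower : ∀ n, 1 - (μ n).real (A n)ᶜ ≤ (μ n).real (A n) := fun n => by
    have := measureReal_union_le (μ := μ n) (A n) (A n)ᶜ
    rw [Set.union_compl_self, probReal_univ] at this
    linarith
  have hreal : Tendsto (fun n => (μ n).real (A n)) atTop (𝓝 1) := by
    refine tendsto_of_tendsto_of_tendsto_of_le_of_le' (by simpa using hδ.const_sub 1)
      tendsto_const_nhds ?_ (Eventually.of_forall fun n => measureReal_le_one)
    filter_upwards [h] with n hn
    linarith [hlower n]
  convert ENNReal.tendsto_ofReal hreal using 2 with n
  · exact (ofReal_measureReal).symm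
  · exact ENNReal.ofReal_one.symm

section

variable {Ω : Type*} [MeasurableSpace Ω] {μ : Measure Ω}

lemma measureReal_exists_lt_abs_add_le [IsFiniteMeasure μ] {X Y : ℕ → Ω → ℝ} {n : ℕ}
    {t u δ η : ℝ} (hX : ∀ i < n, μ.real {ω | t ≤ |X i ω|} ≤ δ)
    (hY : ∀ i < n, μ.real {ω | u < |Y i ω|} ≤ η) :
    μ.real {ω | ∃ i < n, t + u < |X i ω + Y i ω|} ≤ n * (δ + η) := by
  have hsub : {ω | ∃ i < n, t + u < |X i ω + Y i ω|}
      ⊆ ⋃ i ∈ range n, ({ω | t ≤ |X i ω|} ∪ {ω | u < |Y i ω|}) := by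
    rintro ω ⟨i, hi, hlt⟩
    refine Set.mem_biUnion (mem_range.2 hi) ?_
    by_contra! hnot
    simp only [Set.mem_union, Set.mem_ofPred_eq, not_or, not_le, not_lt] at hnot
    linarith [abs_add_le (X i ω) (Y i ω)]
  calc _ ≤ ∑ i ∈ range n, μ.real ({ω | t ≤ |X i ω|} ∪ {ω | u < |Y i ω|}) :=
        (measureReal_mono hsub (measure_ne_top _ _)).trans (measureReal_biUnion_finset_le _ _)
    _ ≤ ∑ _i ∈ range n, (δ + η) := sum_le_sum fun i hi => (measureReal_union_le _ _).trans
        (add_le_add (hX i (mem_range.1 hi)) (hY i (mem_range.1 hi)))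
    _ = n * (δ + η) := by rw [sum_const, card_range, nsmul_eq_mul]

lemma measureReal_lt_abs_le_of_discreteLaplace [IsProbabilityMeasure μ] {e : Ω → ℤ}
    (he : Measurable e) {lam : ℝ} (h0 : 0 < lam) (h1 : lam < 1)
    (hlaw : ∀ z, μ {ω | e ω = z} = ENNReal.ofReal (discreteLaplacePMF lam z))
    {u : ℝ} (hu : 0 ≤ u) :
    μ.real {ω | u < |(e ω : ℝ)|} ≤ 2 * lam ^ u := by
  set K := ⌊u⌋₊
  have hK : e ⁻¹' (Icc (-K : ℤ) K : Set ℤ) ⊆ {ω | u < |(e ω : ℝ)|}ᶜ := by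
    intro ω hω
    simp only [coe_Icc, Set.mem_preimage, Set.mem_Icc] at hω
    simp only [Set.mem_compl_iff, Set.mem_ofPred_eq, not_lt]
    calc |(e ω : ℝ)| ≤ K := abs_le.2 ⟨by exact_mod_cast hω.1, by exact_mod_cast hω.2⟩
      _ ≤ u := Nat.floor_le hu
  have hcore : μ.real (e ⁻¹' (Icc (-K : ℤ) K : Set ℤ)) = 1 - 2 * lam ^ (K + 1) / (1 + lam) := by
    rw [← sum_measureReal_preimage_singleton _ (fun z _ => he (measurableSet_singleton z)),
      ← sum_Icc_discreteLaplacePMF (by linarith) K]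
    refine sum_congr rfl fun z _ => ?_
    rw [measureReal_def, show e ⁻¹' {z} = {ω | e ω = z} from rfl, hlaw z,
      ENNReal.toReal_ofReal (r := discreteLaplacePMF lam z)
        (mul_nonneg (div_nonneg (by linarith) (by linarith)) (by positivity))]
  calc μ.real {ω | u < |(e ω : ℝ)|}
      ≤ μ.real (e ⁻¹' (Icc (-K : ℤ) K : Set ℤ))ᶜ := measureReal_mono (Set.subset_compl_comm.1 hK)
    _ = 2 * lam ^ (K + 1) / (1 + lam) := by
      rw [probReal_compl_eq_one_sub (he .of_discrete), hcore]; ring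
    _ ≤ 2 * lam ^ (K + 1) := div_le_self (by positivity) (by linarith)
    _ ≤ 2 * lam ^ u := by
      rw [← rpow_natCast]
      gcongr 2 * ?_
      exact rpow_le_rpow_of_exponent_ge h0 h1.le (by push_cast; exact (Nat.lt_floor_add_one u).le)

lemma measureReal_le_abs_sum_sub_integral_le [IsProbabilityMeasure μ] {ι : Type*}
    {X : ι → Ω → ℝ} (s : Finset ι) (hindep : iIndepFun (fun i : s => X i) μ)
    (hmeas : ∀ i ∈ s, AEMeasurable (X i) μ)
    {lo hi : ℝ} (hX : ∀ i ∈ s, ∀ᵐ ω ∂μ, X i ω ∈ Set.Icc lo hi) {t : ℝ} (ht : 0 ≤ t) :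
    μ.real {ω | t ≤ |∑ i ∈ s, (X i ω - μ[X i])|}
      ≤ 2 * exp (-2 * t ^ 2 / (#s * (hi - lo) ^ 2)) := by
  set S : Ω → ℝ := fun ω => ∑ i ∈ s, (X i ω - μ[X i])
  have hcentered : iIndepFun (fun i : s => fun ω => X i ω - μ[X i]) μ :=
    hindep.comp (fun (i : s) (x : ℝ) => x - ∫ ω, X i ω ∂μ) fun _ => measurable_sub_const _
  have hS : HasSubgaussianMGF S (#s * (‖hi - lo‖₊ / 2) ^ 2) μ := by
    have := (HasSubgaussianMGF.sum_of_iIndepFun hcentered (s := univ)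
      fun i _ => hasSubgaussianMGF_of_mem_Icc (hmeas i i.2) (hX i i.2)).congr
      (ae_of_all _ fun ω => sum_coe_sort s fun i => X i ω - μ[X i])
    rwa [sum_const, card_univ, Fintype.card_coe, nsmul_eq_mul] at this
  have hsub : {ω | t ≤ |S ω|} ⊆ {ω | t ≤ S ω} ∪ {ω | t ≤ (-S) ω} :=
    fun ω (hω : t ≤ |S ω|) => by
    rcases le_abs'.1 hω with h | h
    · exact Or.inr (by simp only [Set.mem_ofPred_eq, Pi.neg_apply]; linarith)
    · exact Or.inl h
  calc μ.real {ω | t ≤ |S ω|} ≤ μ.real {ω | t ≤ S ω} + μ.real {ω | t ≤ (-S) ω} :=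
        (measureReal_mono hsub).trans (measureReal_union_le _ _)
    _ ≤ _ := add_le_add (hS.measure_ge_le ht) (hS.neg.measure_ge_le ht)
    _ = _ := by
      have hc : 2 * ((#s * (‖hi - lo‖₊ / 2) ^ 2 : NNReal) : ℝ) = #s * (hi - lo) ^ 2 / 2 := by
        push_cast
        rw [Real.norm_eq_abs, div_pow, sq_abs]
        ring
      rw [hc, div_div_eq_mul_div]
      ring_nf

def edgeOf {n i : ℕ} (hi : i < n) (j : (range n).erase i) :
    {p : ℕ × ℕ // p.1 < p.2 ∧ p.2 < n} :=
  ⟨(min i j, max i j), by have := mem_erase.1 j.2; rw [mem_range] at this; omega⟩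

lemma edgeOf_injective {n i : ℕ} (hi : i < n) : Function.Injective (edgeOf hi) := by
  intro j k hjk
  simp only [edgeOf, Subtype.mk.injEq, Prod.mk.injEq] at hjk
  have := mem_erase.1 j.2
  have := mem_erase.1 k.2
  exact Subtype.ext (by omega)

lemma measureReal_le_abs_degree_sub_integral_le [IsProbabilityMeasure μ] {q n i : ℕ}
    {a : ℕ → ℕ → Ω → ℕ} (hrange : ∀ j k ω, a j k ω < q) (hsym : ∀ j k, a j k = a k j)
    (hmeas : ∀ j k, Measurable (a j k))
    (hindep : iIndepFun
      (fun p : {p : ℕ × ℕ // p.1 < p.2 ∧ p.2 < n} => fun ω => (a p.1.1 p.1.2 ω : ℝ)) μ)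
    (hi : i < n) {t : ℝ} (ht : 0 ≤ t) :
    μ.real {ω | t ≤ |∑ j ∈ (range n).erase i, (a i j ω : ℝ)
        - ∫ ω', ∑ j ∈ (range n).erase i, (a i j ω' : ℝ) ∂μ|}
      ≤ 2 * exp (-2 * t ^ 2 / ((n - 1) * (q - 1) ^ 2)) := by
  set s := (range n).erase i
  have hIcc : ∀ j ω, (a i j ω : ℝ) ∈ Set.Icc 0 ((q : ℝ) - 1) := fun j ω =>
    ⟨Nat.cast_nonneg _, by have := hrange i j ω; rw [le_sub_iff_add_le]; exact_mod_cast this⟩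
  have hmeas' : ∀ j, Measurable fun ω => (a i j ω : ℝ) := fun j => by fun_prop
  have hint : ∀ j ∈ s, Integrable (fun ω => (a i j ω : ℝ)) μ := fun j _ =>
    Integrable.of_mem_Icc _ _ (hmeas' j).aemeasurable (ae_of_all _ (hIcc j))
  have hindep' : iIndepFun (fun j : s => fun ω => (a i j ω : ℝ)) μ := by
    convert hindep.precomp (edgeOf_injective hi) using 3 with j ω
    simp only [edgeOf, min_def, max_def]
    split_ifs <;> simp [hsym]
  have hcard : ((#s : ℕ) : ℝ) = n - 1 := by
    rw [card_erase_of_mem (mem_range.2 hi), card_range, Nat.cast_pred (by omega)]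
  have := measureReal_le_abs_sum_sub_integral_le s hindep' (fun j _ => (hmeas' j).aemeasurable)
    (fun j _ => ae_of_all _ (hIcc j)) ht
  rw [hcard, sub_zero] at this
  simpa only [integral_finsetSum _ hint, ← sum_sub_distrib] using this

lemma measureReal_exists_noisyDegree_deviation_gt_le [IsProbabilityMeasure μ] {q n : ℕ}
    (hq : 2 ≤ q) (hn : 2 ≤ n) {a : ℕ → ℕ → Ω → ℕ} {e : ℕ → Ω → ℤ} {ε : ℝ}
    (hrange : ∀ i j ω, a i j ω < q) (hsym : ∀ i j, a i j = a j i)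
    (hmeasa : ∀ i j, Measurable (a i j))
    (hindep : iIndepFun
      (fun p : {p : ℕ × ℕ // p.1 < p.2 ∧ p.2 < n} => fun ω => (a p.1.1 p.1.2 ω : ℝ)) μ)
    (hmease : ∀ i, Measurable (e i))
    (hnoise : ∀ i < n, ∀ z : ℤ,
      μ {ω | e i ω = z} = ENNReal.ofReal (discreteLaplacePMF (exp (-ε / 2)) z))
    (hε : 4 * √(log n) ≤ ε) :
    μ.real {ω | ∃ i < n, 2 * ((q : ℝ) - 1) * √(((n : ℝ) - 1) * log ((n : ℝ) - 1))
        < |(∑ j ∈ (range n).erase i, (a i j ω : ℝ)) + (e i ω : ℝ)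
            - ∫ ω', ∑ j ∈ (range n).erase i, (a i j ω' : ℝ) ∂μ|}
      ≤ 8 / ((n : ℝ) - 1) := by
  set m : ℝ := n - 1
  set L := log m
  set b : ℝ := q - 1
  set t := b * √(m * L)
  have hn' : (2 : ℝ) ≤ n := by exact_mod_cast hn
  have hm : 1 ≤ m := by linarith
  have hb : 1 ≤ b := by linarith [show (2 : ℝ) ≤ q by exact_mod_cast hq]
  have hL : 0 ≤ L := log_nonneg hm
  have hLn : L ≤ log n := log_le_log (by linarith) (by linarith)
  have ht : 0 ≤ t := by positivity
  have hexp : 2 * exp (-2 * L) = 2 / m ^ 2 := by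
    rw [show -2 * L = -log (m ^ 2) by rw [log_pow]; push_cast; ring, exp_neg,
      exp_log (by positivity), div_eq_mul_inv]
  have hdeg : ∀ i < n, μ.real {ω | t ≤ |(∑ j ∈ (range n).erase i, (a i j ω : ℝ))
      - ∫ ω', ∑ j ∈ (range n).erase i, (a i j ω' : ℝ) ∂μ|} ≤ 2 / m ^ 2 := fun i hi => by
    refine (measureReal_le_abs_degree_sub_integral_le hrange hsym hmeasa hindep hi ht).trans_eq ?_
    rw [← hexp, mul_pow, sq_sqrt (by positivity)]
    change 2 * exp (-2 * (b ^ 2 * (m * L)) / (m * b ^ 2)) = _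
    congr 3
    field_simp
  have hrate : 2 * L ≤ ε / 2 * t := calc
    2 * L = 2 * √L * √L * 1 := by rw [mul_assoc 2, mul_self_sqrt hL, mul_one]
    _ ≤ 2 * √L * √L * (b * √m) := by gcongr; nlinarith [one_le_sqrt.2 hm]
    _ = 2 * √L * t := by
      rw [show t = b * (√m * √L) from congrArg (b * ·) (sqrt_mul (by linarith) L)]; ring
    _ ≤ ε / 2 * t := by gcongr; linarith [sqrt_le_sqrt hLn]
  have hnoise' : ∀ i < n, μ.real {ω | t < |(e i ω : ℝ)|} ≤ 2 / m ^ 2 := fun i hi => by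
    have hε0 : 0 < ε := (mul_pos four_pos (sqrt_pos.2 (log_pos (by linarith)))).trans_le hε
    refine (measureReal_lt_abs_le_of_discreteLaplace (hmease i) (exp_pos _)
      (exp_lt_one_iff.2 (by linarith)) (hnoise i hi) ht).trans ?_
    rw [← exp_mul, ← hexp]
    exact mul_le_mul_of_nonneg_left (exp_le_exp.2 (by linarith)) zero_le_two
  calc _ ≤ μ.real {ω | ∃ i < n, t + t < |((∑ j ∈ (range n).erase i, (a i j ω : ℝ))
        - ∫ ω', ∑ j ∈ (range n).erase i, (a i j ω' : ℝ) ∂μ) + (e i ω : ℝ)|} := by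
        refine measureReal_mono fun ω ⟨i, hi, hlt⟩ => ⟨i, hi, ?_⟩
        rwa [← two_mul, ← add_sub_right_comm, ← mul_assoc]
    _ ≤ n * (2 / m ^ 2 + 2 / m ^ 2) := measureReal_exists_lt_abs_add_le hdeg hnoise'
    _ = 4 * (m + 1) / m ^ 2 := by simp only [m]; ring
    _ ≤ 8 / m := by
      rw [div_le_div_iff₀ (by positivity) (by positivity)]
      nlinarith

end

theorem noisy_degree_uniform_deviation_general
    (q : ℕ) (hq : 2 ≤ q)
    (Ω : ℕ → Type) (mΩ : ∀ n, MeasurableSpace (Ω n))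
    (P : ∀ n, Measure (Ω n)) (hP : ∀ n, IsProbabilityMeasure (P n))
    (ε : ℕ → ℝ)
    (a : ∀ n, ℕ → ℕ → Ω n → ℕ) (e : ∀ n, ℕ → Ω n → ℤ)
    -- edge weights take values in `{0,…,q-1}`, are symmetric, with zero diagonal
    (hrange : ∀ n i j ω, a n i j ω < q)
    (hsym : ∀ n i j, a n i j = a n j i)
    (hmeasa : ∀ n i j, Measurable (a n i j))
    -- discrete Laplace noises with `λ_n = exp(-ε_n/2)`
    (hmease : ∀ n i, Measurable (e n i))
    (hnoise : ∀ n i, i < n → ∀ z : ℤ,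
      P n {ω | e n i ω = z}
        = ENNReal.ofReal (discreteLaplacePMF (Real.exp (-(ε n) / 2)) z))
    -- the edge weights (over pairs i < j) and the noises are mutually independent
    (hindep : ∀ n, iIndepFun
      (Sum.elim
        (fun (p : {p : ℕ × ℕ // p.1 < p.2 ∧ p.2 < n}) (ω : Ω n) =>
          ((a n p.1.1 p.1.2 ω : ℤ)))
        (fun (i : {i : ℕ // i < n}) (ω : Ω n) => e n i.1 ω))
      (P n))
    -- `ε_n ≥ c √(log n)` with `c ≥ 4`
    (c : ℝ) (hc : 4 ≤ c)
    (hε : ∀ n : ℕ, c * Real.sqrt (Real.log n) ≤ ε n) :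
    Tendsto (fun n => P n {ω | ∀ i, i < n →
        |(∑ j ∈ (Finset.range n).erase i, (a n i j ω : ℝ)) + (e n i ω : ℝ)
            - ∫ ω', ∑ j ∈ (Finset.range n).erase i, (a n i j ω' : ℝ) ∂(P n)|
          ≤ 2 * ((q : ℝ) - 1) * Real.sqrt (((n : ℝ) - 1) * Real.log ((n : ℝ) - 1))})
      atTop (nhds 1) := by
  have hδ : Tendsto (fun n : ℕ => 8 / ((n : ℝ) - 1)) atTop (𝓝 0) :=
    tendsto_const_nhds.div_atTop
      (tendsto_atTop_add_const_right _ (-1) tendsto_natCast_atTop_atTop)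
  refine tendsto_measure_one_of_measureReal_compl_le hδ
    (Eventually.mono (eventually_ge_atTop 2) fun n hn => ?_)
  have hedges : iIndepFun
      (fun p : {p : ℕ × ℕ // p.1 < p.2 ∧ p.2 < n} => fun ω => (a n p.1.1 p.1.2 ω : ℝ)) (P n) :=
    ((hindep n).precomp Sum.inl_injective).comp (fun _ (z : ℤ) => (z : ℝ))
      fun _ => measurable_from_top
  have hεn : 4 * √(log n) ≤ ε n := (mul_le_mul_of_nonneg_right hc (sqrt_nonneg _)).trans (hε n)
  refine (measureReal_mono fun ω hω => ?_).trans
    (measureReal_exists_noisyDegree_deviation_gt_le hq hn (hrange n) (hsym n) (hmeasa n) hedges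
      (hmease n) (hnoise n) hεn)
  simpa using hω

/-- In the generalized β-model with the discrete Laplace mechanism
(`λ_n = exp(-ε_n/2)`), if `ε_n ≥ c √(log n)` with `c ≥ 4`, then with probability approaching
one as `n → ∞`, `max_{1≤i≤n} |d̄_i - E(d_i)| ≤ 2(q-1)√((n-1) log(n-1))`. -/
theorem noisy_degree_uniform_deviation
    (q : ℕ) (hq : 2 ≤ q)
    (Ω : ℕ → Type) (mΩ : ∀ n, MeasurableSpace (Ω n))
    (P : ∀ n, Measure (Ω n)) (hP : ∀ n, IsProbabilityMeasure (P n))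
    (α : ℕ → ℕ → ℝ) (ε : ℕ → ℝ)
    (a : ∀ n, ℕ → ℕ → Ω n → ℕ) (e : ∀ n, ℕ → Ω n → ℤ)
    -- edge weights take values in `{0,…,q-1}`, are symmetric, with zero diagonal
    (hrange : ∀ n i j ω, a n i j ω < q)
    (hsym : ∀ n i j, a n i j = a n j i)
    (hdiag : ∀ n i ω, a n i i ω = 0)
    (hmeasa : ∀ n i j, Measurable (a n i j))
    -- edge-weight distribution of the generalized β-model
    (hlaw : ∀ n i j, i < n → j < n → i ≠ j → ∀ k, k < q →
      P n {ω | a n i j ω = k} = ENNReal.ofReal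
        (Real.exp ((k : ℝ) * (α n i + α n j)) /
          ∑ l ∈ Finset.range q, Real.exp ((l : ℝ) * (α n i + α n j))))
    -- discrete Laplace noises with `λ_n = exp(-ε_n/2)`
    (hmease : ∀ n i, Measurable (e n i))
    (hnoise : ∀ n i, i < n → ∀ z : ℤ,
      P n {ω | e n i ω = z}
        = ENNReal.ofReal (discreteLaplacePMF (Real.exp (-(ε n) / 2)) z))
    -- the edge weights (over pairs i < j) and the noises are mutually independent
    (hindep : ∀ n, iIndepFun
      (Sum.elim
        (fun (p : {p : ℕ × ℕ // p.1 < p.2 ∧ p.2 < n}) (ω : Ω n) =>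
          ((a n p.1.1 p.1.2 ω : ℤ)))
        (fun (i : {i : ℕ // i < n}) (ω : Ω n) => e n i.1 ω))
      (P n))
    -- `ε_n ≥ c √(log n)` with `c ≥ 4`
    (c : ℝ) (hc : 4 ≤ c)
    (hε : ∀ n : ℕ, c * Real.sqrt (Real.log n) ≤ ε n) :
    Tendsto (fun n => P n {ω | ∀ i, i < n →
        |(∑ j ∈ (Finset.range n).erase i, (a n i j ω : ℝ)) + (e n i ω : ℝ)
            - ∫ ω', ∑ j ∈ (Finset.range n).erase i, (a n i j ω' : ℝ) ∂(P n)|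
          ≤ 2 * ((q : ℝ) - 1) * Real.sqrt (((n : ℝ) - 1) * Real.log ((n : ℝ) - 1))})
      atTop (nhds 1) :=
  noisy_degree_uniform_deviation_general q hq Ω mΩ P hP ε a e hrange hsym hmeasa hmease hnoise
    hindep c hc hε
end

section
/- Let e_1,…,e_n be i.i.d. discrete Laplace random variables with parameter λ_n = exp(−ε_n/2), and let κ_n = 2(q−1)√((n−1) log(n−1)) with q ≥ 2 fixed. If ε_n·⌊κ_n/2⌋ ≥ 4 log n, then P(max_{1≤i≤n} |e_i| ≥ κ_n/2) ≤ 2/n. -/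
open MeasureTheory ProbabilityTheory

lemma discreteLaplacePMF_neg (lam : ℝ) (z : ℤ) :
    discreteLaplacePMF lam (-z) = discreteLaplacePMF lam z := by
  simp only [discreteLaplacePMF, Int.natAbs_neg]

lemma discreteLaplacePMF_nonneg {lam : ℝ} (h0 : 0 ≤ lam) (h1 : lam ≤ 1) (z : ℤ) :
    0 ≤ discreteLaplacePMF lam z := by
  have : 0 ≤ 1 - lam := by linarith
  unfold discreteLaplacePMF
  positivity

lemma discreteLaplacePMF_nonpos {lam : ℝ} (h1 : 1 ≤ lam) (z : ℤ) :
    discreteLaplacePMF lam z ≤ 0 :=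
  mul_nonpos_of_nonpos_of_nonneg (div_nonpos_of_nonpos_of_nonneg (by linarith) (by linarith))
    (pow_nonneg (by linarith) _)

lemma hasSum_discreteLaplacePMF_tail {lam : ℝ} (h0 : 0 ≤ lam) (h1 : lam < 1) (m : ℕ) :
    HasSum (fun k : ℕ => discreteLaplacePMF lam (m + k : ℕ)) (lam ^ m / (1 + lam)) := by
  have hsub : 1 - lam ≠ 0 := by linarith
  have hterm : (fun k : ℕ => discreteLaplacePMF lam (m + k : ℕ)) =
      fun k => (1 - lam) / (1 + lam) * lam ^ m * lam ^ k := by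
    funext k
    simp only [discreteLaplacePMF, Int.natAbs_natCast, pow_add]
    ring
  have hval : lam ^ m / (1 + lam) = (1 - lam) / (1 + lam) * lam ^ m * (1 - lam)⁻¹ := by
    field_simp
  rw [hterm, hval]
  exact (hasSum_geometric_of_lt_one h0 h1).mul_left _

lemma tsum_ofReal_discreteLaplacePMF_tail_le {lam : ℝ} (h0 : 0 ≤ lam) (m : ℕ) :
    ∑' k : ℕ, ENNReal.ofReal (discreteLaplacePMF lam (m + k : ℕ)) ≤
      ENNReal.ofReal (lam ^ m / (1 + lam)) := by
  rcases lt_or_ge lam 1 with h1 | h1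
  · have hsum := hasSum_discreteLaplacePMF_tail h0 h1 m
    rw [← ENNReal.ofReal_tsum_of_nonneg (fun _ => discreteLaplacePMF_nonneg h0 h1.le _)
      hsum.summable, hsum.tsum_eq]
  · -- for `lam ≥ 1` the formula is no distribution, and `ofReal` truncates every mass to `0`
    simp only [ENNReal.ofReal_of_nonpos (discreteLaplacePMF_nonpos h1 _), tsum_zero, zero_le]

lemma measure_le_natAbs_le_of_discreteLaplace {Ω : Type*} [MeasurableSpace Ω] (P : Measure Ω)
    {lam : ℝ} (h0 : 0 ≤ lam) (X : Ω → ℤ)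
    (hX : ∀ z : ℤ, P {ω | X ω = z} = ENNReal.ofReal (discreteLaplacePMF lam z)) (m : ℕ) :
    P {ω | m ≤ (X ω).natAbs} ≤ 2 * ENNReal.ofReal (lam ^ m / (1 + lam)) := by
  have hcover : {ω | m ≤ (X ω).natAbs} ⊆
      ⋃ k : ℕ, ({ω | X ω = (m + k : ℕ)} ∪ {ω | X ω = -(m + k : ℕ)}) := by
    intro ω hω
    obtain ⟨k, hk⟩ := Nat.exists_eq_add_of_le hω
    refine Set.mem_iUnion.2 ⟨k, ?_⟩
    rcases Int.natAbs_eq (X ω) with h | h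
    · exact Or.inl (h.trans (by rw [hk]))
    · exact Or.inr (h.trans (by rw [hk]))
  calc P {ω | m ≤ (X ω).natAbs}
      ≤ ∑' k : ℕ, P ({ω | X ω = (m + k : ℕ)} ∪ {ω | X ω = -(m + k : ℕ)}) :=
        (measure_mono hcover).trans (measure_iUnion_le _)
    _ ≤ ∑' k : ℕ, 2 * ENNReal.ofReal (discreteLaplacePMF lam (m + k : ℕ)) :=
        ENNReal.tsum_le_tsum fun k => (measure_union_le _ _).trans_eq <| by
          rw [hX, hX, discreteLaplacePMF_neg, two_mul]
    _ ≤ 2 * ENNReal.ofReal (lam ^ m / (1 + lam)) := by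
        rw [ENNReal.tsum_mul_left]
        exact mul_le_mul_right (tsum_ofReal_discreteLaplacePMF_tail_le h0 m) 2

lemma exp_neg_half_pow_le_inv_sq {ε x : ℝ} (hx : 0 < x) {m : ℕ}
    (h : 4 * Real.log x ≤ ε * m) : Real.exp (-ε / 2) ^ m ≤ (x ^ 2)⁻¹ := by
  rw [← Real.exp_nat_mul, ← Real.exp_log (pow_pos hx 2), ← Real.exp_neg, Real.exp_le_exp,
    Real.log_pow]
  push_cast
  linarith

theorem discrete_laplace_max_tail_bound_general
    {Ω : Type*} [MeasurableSpace Ω] (P : Measure Ω)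
    (n : ℕ) (hn : 0 < n)
    (ε : ℝ)
    (e : Fin n → Ω → ℤ)
    (hpmf : ∀ i (z : ℤ),
      P {ω | e i ω = z} = ENNReal.ofReal (discreteLaplacePMF (Real.exp (-ε / 2)) z))
    (kap : ℝ)
    (hcond : 4 * Real.log n ≤ ε * (⌊kap / 2⌋₊ : ℝ)) :
    P {ω | kap / 2 ≤ Finset.univ.sup' ⟨⟨0, hn⟩, Finset.mem_univ _⟩
          (fun i => |(e i ω : ℝ)|)}
      ≤ ENNReal.ofReal (2 / n) := by
  set lam := Real.exp (-ε / 2)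
  set m := ⌊kap / 2⌋₊
  have hnR : (0 : ℝ) < n := Nat.cast_pos.2 hn
  have hlam : 0 ≤ lam := (Real.exp_pos _).le
  have hpow : lam ^ m ≤ ((n : ℝ) ^ 2)⁻¹ := exp_neg_half_pow_le_inv_sq hnR hcond
  have hcover : {ω | kap / 2 ≤ Finset.univ.sup' ⟨⟨0, hn⟩, Finset.mem_univ _⟩
      (fun i => |(e i ω : ℝ)|)} ⊆ ⋃ i, {ω | m ≤ (e i ω).natAbs} := by
    intro ω hω
    obtain ⟨i, -, hi⟩ := (Finset.le_sup'_iff _).1 (show kap / 2 ≤ _ from hω)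
    exact Set.mem_iUnion.2 ⟨i, Nat.floor_le_of_le (by rwa [Nat.cast_natAbs, Int.cast_abs])⟩
  have hreal : n * (2 * (lam ^ m / (1 + lam))) ≤ 2 / n := by
    calc n * (2 * (lam ^ m / (1 + lam))) ≤ n * (2 * ((n : ℝ) ^ 2)⁻¹) := by
          gcongr
          exact (div_le_self (pow_nonneg hlam m) (by linarith)).trans hpow
      _ = 2 / n := by field_simp
  calc P _ ≤ ∑ i, P {ω | m ≤ (e i ω).natAbs} :=
        (measure_mono hcover).trans (measure_iUnion_fintype_le P _)
    _ ≤ ∑ _i : Fin n, 2 * ENNReal.ofReal (lam ^ m / (1 + lam)) :=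
        Finset.sum_le_sum fun i _ => measure_le_natAbs_le_of_discreteLaplace P hlam (e i) (hpmf i) m
    _ = ENNReal.ofReal (n * (2 * (lam ^ m / (1 + lam)))) := by
        rw [Finset.sum_const, Finset.card_univ, Fintype.card_fin, nsmul_eq_mul,
          ENNReal.ofReal_mul hnR.le, ENNReal.ofReal_mul zero_le_two, ENNReal.ofReal_natCast,
          ENNReal.ofReal_ofNat]
    _ ≤ ENNReal.ofReal (2 / n) := ENNReal.ofReal_le_ofReal hreal

/-- For i.i.d. discrete Laplace noises with parameter `λ_n = exp(-ε_n/2)` and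
`κ_n = 2(q-1)√((n-1)log(n-1))`, if `ε_n ⌊κ_n/2⌋ ≥ 4 log n` then
`P(max_i |e_i| ≥ κ_n/2) ≤ 2/n`. -/
theorem discrete_laplace_max_tail_bound
    {Ω : Type*} [MeasurableSpace Ω] (P : Measure Ω) [IsProbabilityMeasure P]
    (n q : ℕ) (hn : 0 < n) (hq : 2 ≤ q)
    (ε : ℝ)
    (e : Fin n → Ω → ℤ) (hmeas : ∀ i, Measurable (e i))
    (hpmf : ∀ i (z : ℤ),
      P {ω | e i ω = z} = ENNReal.ofReal (discreteLaplacePMF (Real.exp (-ε / 2)) z))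
    (hindep : iIndepFun e P)
    (kap : ℝ)
    (hkap : kap = 2 * ((q : ℝ) - 1) * Real.sqrt (((n : ℝ) - 1) * Real.log ((n : ℝ) - 1)))
    (hcond : 4 * Real.log n ≤ ε * (⌊kap / 2⌋₊ : ℝ)) :
    P {ω | kap / 2 ≤ Finset.univ.sup' ⟨⟨0, hn⟩, Finset.mem_univ _⟩
          (fun i => |(e i ω : ℝ)|)}
      ≤ ENNReal.ofReal (2 / n) :=
  discrete_laplace_max_tail_bound_general P n hn ε e hpmf kap hcond
end

section
/- (Skew discrete Laplace mechanism) Let λ, μ ∈ (0,1), let Z_1,…,Z_k be i.i.d. skew discrete Laplace random variables with parameters (λ, μ), and let Δ > 0. Then for any a, b ∈ ℤ^k with ‖a − b‖_1 ≤ Δ and any s ∈ ℤ^k, ∏_{i=1}^k P(Z_i = s_i − a_i) ≤ e^{ε} ∏_{i=1}^k P(Z_i = s_i − b_i), where ε = −Δ log(min(λ, μ)). Consequently, for f : 𝒢 → ℤ^k with global sensitivity Δ_G(f), the mechanism outputting f(G) + (Z_1,…,Z_k) is ε-edge differentially private with ε = −Δ_G(f) log(λ ∧ μ). -/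
open MeasureTheory ProbabilityTheory

/-- Probability mass function of the skew discrete Laplace distribution with parameters
`lam, mu ∈ (0,1)`: `P(Z = z) = C(lam,mu) lam^z` for `z ≥ 0` and `P(Z = z) = C(lam,mu) mu^{|z|}`
for `z ≤ 0`, where `C(lam,mu) = (1-lam)(1-mu)/(1-lam*mu)`. -/
noncomputable def skewDiscreteLaplacePMF (lam mu : ℝ) (z : ℤ) : ℝ :=
  (1 - lam) * (1 - mu) / (1 - lam * mu) *
    (if 0 ≤ z then lam ^ z.toNat else mu ^ (-z).toNat)

/-!
A skew discrete Laplace mass function changes by a factor `lam` or `mu` between neighbouring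
integers, so moving the argument by one step changes it by at most a factor `1 / min lam mu`,
and moving it by `n` steps by at most `(min lam mu) ^ (-n)`. Multiplying over the coordinates,
an `ℓ₁`-shift by at most `Δ` costs at most `exp (-Δ log (min lam mu))`. By independence, this
pointwise bound on the mass functions of `f G + Z` and `f G' + Z` sums to the same bound on the
probability of any set of outcomes.
-/

theorem pow_natAbs_sub_mul_le_of_step {f : ℤ → ℝ} {c : ℝ} (hc : 0 ≤ c)
    (hstep : ∀ z, c * f z ≤ f (z + 1) ∧ c * f (z + 1) ≤ f z) (x y : ℤ) :
    c ^ (x - y).natAbs * f x ≤ f y := by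
  have key : ∀ (n : ℕ) z, c ^ n * f z ≤ f (z + n) ∧ c ^ n * f (z + n) ≤ f z := by
    intro n
    induction n with
    | zero => simp
    | succ n ih =>
      intro z
      obtain ⟨hup, hdown⟩ := ih z
      obtain ⟨hup₁, hdown₁⟩ := hstep (z + n)
      push_cast
      rw [← add_assoc, pow_succ]
      constructor
      · calc c ^ n * c * f z = c * (c ^ n * f z) := by ring
          _ ≤ c * f (z + n) := mul_le_mul_of_nonneg_left hup hc
          _ ≤ f (z + n + 1) := hup₁
      · calc c ^ n * c * f (z + n + 1) = c ^ n * (c * f (z + n + 1)) := by ring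
          _ ≤ c ^ n * f (z + n) := mul_le_mul_of_nonneg_left hdown₁ (pow_nonneg hc n)
          _ ≤ f z := hdown
  rcases le_total x y with hxy | hxy
  · obtain ⟨n, rfl⟩ := Int.exists_add_of_le hxy
    simpa using (key n x).1
  · obtain ⟨n, rfl⟩ := Int.exists_add_of_le hxy
    simpa using (key n y).2

theorem le_exp_mul_of_step {f : ℤ → ℝ} {c : ℝ} (hc : 0 < c)
    (hstep : ∀ z, c * f z ≤ f (z + 1) ∧ c * f (z + 1) ≤ f z) (x y : ℤ) :
    f x ≤ Real.exp (-|(x : ℝ) - y| * Real.log c) * f y := by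
  set n := (x - y).natAbs
  have hn : |(x : ℝ) - y| = n := by simp [n, Nat.cast_natAbs]
  have hcn : c ^ n = Real.exp (n * Real.log c) := by rw [Real.exp_nat_mul, Real.exp_log hc]
  have hchain := pow_natAbs_sub_mul_le_of_step hc.le hstep x y
  rw [hcn] at hchain
  calc f x = Real.exp (-(n * Real.log c)) * (Real.exp (n * Real.log c) * f x) := by
        rw [← mul_assoc, ← Real.exp_add, neg_add_cancel, Real.exp_zero, one_mul]
    _ ≤ Real.exp (-(n * Real.log c)) * f y := mul_le_mul_of_nonneg_left hchain (Real.exp_pos _).le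
    _ = Real.exp (-|(x : ℝ) - y| * Real.log c) * f y := by rw [hn, neg_mul]

theorem prod_le_exp_mul_prod_of_step {ι : Type*} [Fintype ι] {f : ℤ → ℝ} {c : ℝ}
    (hc₀ : 0 < c) (hc₁ : c ≤ 1) (hf : ∀ z, 0 ≤ f z)
    (hstep : ∀ z, c * f z ≤ f (z + 1) ∧ c * f (z + 1) ≤ f z) {a b s : ι → ℤ} {Δ : ℝ}
    (hab : ∑ i, |(a i : ℝ) - b i| ≤ Δ) :
    ∏ i, f (s i - a i) ≤ Real.exp (-Δ * Real.log c) * ∏ i, f (s i - b i) := by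
  have hlog : Real.log c ≤ 0 := Real.log_nonpos hc₀.le hc₁
  calc ∏ i, f (s i - a i)
      ≤ ∏ i, (Real.exp (-|(a i : ℝ) - b i| * Real.log c) * f (s i - b i)) :=
        Finset.prod_le_prod (fun i _ => hf _) fun i _ => by
          simpa [abs_sub_comm] using le_exp_mul_of_step hc₀ hstep (s i - a i) (s i - b i)
    _ = Real.exp (-(∑ i, |(a i : ℝ) - b i|) * Real.log c) * ∏ i, f (s i - b i) := by
        rw [Finset.prod_mul_distrib, ← Real.exp_sum, neg_mul, Finset.sum_mul,
          ← Finset.sum_neg_distrib]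
        simp only [neg_mul]
    _ ≤ Real.exp (-Δ * Real.log c) * ∏ i, f (s i - b i) :=
        mul_le_mul_of_nonneg_right (Real.exp_le_exp.2 (by nlinarith))
          (Finset.prod_nonneg fun i _ => hf _)

section SkewDiscreteLaplace

variable {lam mu : ℝ}

theorem skewDiscreteLaplacePMF_nonneg (hlam : lam ∈ Set.Icc (0 : ℝ) 1)
    (hmu : mu ∈ Set.Icc (0 : ℝ) 1) (z : ℤ) : 0 ≤ skewDiscreteLaplacePMF lam mu z := by
  have hC : 0 ≤ (1 - lam) * (1 - mu) / (1 - lam * mu) :=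
    div_nonneg (mul_nonneg (sub_nonneg.2 hlam.2) (sub_nonneg.2 hmu.2))
      (sub_nonneg.2 (mul_le_one₀ hlam.2 hmu.1 hmu.2))
  unfold skewDiscreteLaplacePMF
  split_ifs
  exacts [mul_nonneg hC (pow_nonneg hlam.1 _), mul_nonneg hC (pow_nonneg hmu.1 _)]

theorem skewDiscreteLaplacePMF_add_one_of_nonneg {z : ℤ} (hz : 0 ≤ z) :
    skewDiscreteLaplacePMF lam mu (z + 1) = lam * skewDiscreteLaplacePMF lam mu z := by
  have h : (z + 1).toNat = z.toNat + 1 := by omega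
  simp only [skewDiscreteLaplacePMF, if_pos hz, if_pos (by omega : 0 ≤ z + 1), h, pow_succ]
  ring

theorem skewDiscreteLaplacePMF_of_neg {z : ℤ} (hz : z < 0) :
    skewDiscreteLaplacePMF lam mu z = mu * skewDiscreteLaplacePMF lam mu (z + 1) := by
  have h : (-z).toNat = (-(z + 1)).toNat + 1 := by omega
  unfold skewDiscreteLaplacePMF
  rw [if_neg (by omega), h, pow_succ]
  split_ifs with hz'
  · rw [show (z + 1).toNat = 0 by omega, show (-(z + 1)).toNat = 0 by omega]
    ring
  · ring

theorem skewDiscreteLaplacePMF_step (hlam : lam ∈ Set.Icc (0 : ℝ) 1)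
    (hmu : mu ∈ Set.Icc (0 : ℝ) 1) (z : ℤ) :
    min lam mu * skewDiscreteLaplacePMF lam mu z ≤ skewDiscreteLaplacePMF lam mu (z + 1) ∧
      min lam mu * skewDiscreteLaplacePMF lam mu (z + 1) ≤ skewDiscreteLaplacePMF lam mu z := by
  have hp := skewDiscreteLaplacePMF_nonneg hlam hmu
  have hm₀ : 0 ≤ min lam mu := le_min hlam.1 hmu.1
  rcases le_or_gt 0 z with hz | hz
  · have hml : min lam mu ≤ lam := min_le_left _ _
    have hml₁ : min lam mu * lam ≤ 1 := mul_le_one₀ (hml.trans hlam.2) hlam.1 hlam.2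
    rw [skewDiscreteLaplacePMF_add_one_of_nonneg hz]
    constructor <;> nlinarith [hp z]
  · have hmm : min lam mu ≤ mu := min_le_right _ _
    have hmm₁ : min lam mu * mu ≤ 1 := mul_le_one₀ (hmm.trans hmu.2) hmu.1 hmu.2
    rw [skewDiscreteLaplacePMF_of_neg hz]
    constructor <;> nlinarith [hp (z + 1)]

end SkewDiscreteLaplace

theorem measure_preimage_le_mul_of_forall_singleton {α α' β : Type*} [MeasurableSpace α]
    [MeasurableSpace α'] [MeasurableSpace β] [Countable β] [MeasurableSingletonClass β]
    {μ : Measure α} {ν : Measure α'} {X : α → β} {Y : α' → β} (hX : Measurable X)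
    (hY : Measurable Y) {K : ENNReal} (h : ∀ b, μ (X ⁻¹' {b}) ≤ K * ν (Y ⁻¹' {b}))
    (S : Set β) : μ (X ⁻¹' S) ≤ K * ν (Y ⁻¹' S) := by
  rw [← tsum_measure_preimage_singleton S.to_countable fun b _ => hX (measurableSet_singleton b),
    ← tsum_measure_preimage_singleton S.to_countable fun b _ => hY (measurableSet_singleton b),
    ← ENNReal.tsum_mul_left]
  exact ENNReal.tsum_le_tsum fun b => h b

theorem ProbabilityTheory.iIndepFun.measure_const_add_preimage_singleton {Ω ι β : Type*}
    [MeasurableSpace Ω] {μ : Measure Ω} [Fintype ι] [AddCommGroup β] [MeasurableSpace β]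
    [MeasurableSingletonClass β] {Z : ι → Ω → β} (hZ : iIndepFun Z μ) (c s : ι → β) :
    μ ((fun ω i => c i + Z i ω) ⁻¹' {s}) = ∏ i, μ (Z i ⁻¹' {s i - c i}) := by
  have hset : (fun ω i => c i + Z i ω) ⁻¹' {s} = ⋂ i ∈ Finset.univ, Z i ⁻¹' {s i - c i} := by
    ext ω
    simp [funext_iff, eq_sub_iff_add_eq']
  rw [hset, hZ.measure_inter_preimage_eq_mul _ fun i _ => measurableSet_singleton _]

theorem skew_discrete_laplace_mechanism_edge_DP_general
    {Ω : Type*} [MeasurableSpace Ω] (P : Measure Ω)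
    (k : ℕ) (lam mu : ℝ) (hlam : lam ∈ Set.Ioo (0 : ℝ) 1) (hmu : mu ∈ Set.Ioo (0 : ℝ) 1)
    (Z : Fin k → Ω → ℤ) (hmeas : ∀ i, Measurable (Z i))
    (hpmf : ∀ i (z : ℤ), P {ω | Z i ω = z} = ENNReal.ofReal (skewDiscreteLaplacePMF lam mu z))
    (hindep : iIndepFun Z P)
    (Δ : ℝ) (ε : ℝ) (hε : ε = -Δ * Real.log (min lam mu)) :
    (∀ a b s : Fin k → ℤ, (∑ i, |((a i : ℝ) - (b i : ℝ))|) ≤ Δ →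
      (∏ i, skewDiscreteLaplacePMF lam mu (s i - a i))
        ≤ Real.exp ε * ∏ i, skewDiscreteLaplacePMF lam mu (s i - b i)) ∧
    (∀ (V : Type) [Fintype V] (f : SimpleGraph V → (Fin k → ℤ)),
      (∀ G G' : SimpleGraph V, (symmDiff G.edgeSet G'.edgeSet).ncard = 1 →
        (∑ i, |((f G i : ℝ) - (f G' i : ℝ))|) ≤ Δ) →
      ∀ G G' : SimpleGraph V, (symmDiff G.edgeSet G'.edgeSet).ncard = 1 →
        ∀ S : Set (Fin k → ℤ),
          P {ω | (fun i => f G i + Z i ω) ∈ S}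
            ≤ ENNReal.ofReal (Real.exp ε) * P {ω | (fun i => f G' i + Z i ω) ∈ S}) := by
  have hlam' := Set.Ioo_subset_Icc_self hlam
  have hmu' := Set.Ioo_subset_Icc_self hmu
  have hpmf_nonneg := skewDiscreteLaplacePMF_nonneg hlam' hmu'
  have hdensity : ∀ a b s : Fin k → ℤ, (∑ i, |((a i : ℝ) - (b i : ℝ))|) ≤ Δ →
      (∏ i, skewDiscreteLaplacePMF lam mu (s i - a i))
        ≤ Real.exp ε * ∏ i, skewDiscreteLaplacePMF lam mu (s i - b i) := fun a b s hab =>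
    hε ▸ prod_le_exp_mul_prod_of_step (lt_min hlam.1 hmu.1) ((min_le_left _ _).trans hlam.2.le)
      hpmf_nonneg (skewDiscreteLaplacePMF_step hlam' hmu') hab
  refine ⟨hdensity, fun V _ f hf G G' hGG' S => ?_⟩
  have hX : ∀ c : Fin k → ℤ, Measurable fun ω i => c i + Z i ω := fun c =>
    measurable_pi_lambda _ fun i => (hmeas i).const_add (c i)
  refine measure_preimage_le_mul_of_forall_singleton (hX _) (hX _) (fun s => ?_) S
  rw [hindep.measure_const_add_preimage_singleton, hindep.measure_const_add_preimage_singleton]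
  simp only [Set.preimage, Set.mem_singleton_iff, hpmf]
  rw [← ENNReal.ofReal_prod_of_nonneg fun i _ => hpmf_nonneg _,
    ← ENNReal.ofReal_prod_of_nonneg fun i _ => hpmf_nonneg _,
    ← ENNReal.ofReal_mul (Real.exp_nonneg _)]
  exact ENNReal.ofReal_le_ofReal (hdensity _ _ s (hf G G' hGG'))

/-- The skew discrete Laplace mechanism is edge differentially private with
`ε = -Δ log(min(lam, mu))`. -/
theorem skew_discrete_laplace_mechanism_edge_DP
    {Ω : Type*} [MeasurableSpace Ω] (P : Measure Ω) [IsProbabilityMeasure P]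
    (k : ℕ) (lam mu : ℝ) (hlam : lam ∈ Set.Ioo (0 : ℝ) 1) (hmu : mu ∈ Set.Ioo (0 : ℝ) 1)
    (Z : Fin k → Ω → ℤ) (hmeas : ∀ i, Measurable (Z i))
    (hpmf : ∀ i (z : ℤ), P {ω | Z i ω = z} = ENNReal.ofReal (skewDiscreteLaplacePMF lam mu z))
    (hindep : iIndepFun Z P)
    (Δ : ℝ) (hΔ : 0 < Δ) (ε : ℝ) (hε : ε = -Δ * Real.log (min lam mu)) :
    (∀ a b s : Fin k → ℤ, (∑ i, |((a i : ℝ) - (b i : ℝ))|) ≤ Δ →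
      (∏ i, skewDiscreteLaplacePMF lam mu (s i - a i))
        ≤ Real.exp ε * ∏ i, skewDiscreteLaplacePMF lam mu (s i - b i)) ∧
    (∀ (V : Type) [Fintype V] (f : SimpleGraph V → (Fin k → ℤ)),
      (∀ G G' : SimpleGraph V, (symmDiff G.edgeSet G'.edgeSet).ncard = 1 →
        (∑ i, |((f G i : ℝ) - (f G' i : ℝ))|) ≤ Δ) →
      ∀ G G' : SimpleGraph V, (symmDiff G.edgeSet G'.edgeSet).ncard = 1 →
        ∀ S : Set (Fin k → ℤ),
          P {ω | (fun i => f G i + Z i ω) ∈ S}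
            ≤ ENNReal.ofReal (Real.exp ε) * P {ω | (fun i => f G' i + Z i ω) ∈ S}) :=
  skew_discrete_laplace_mechanism_edge_DP_general P k lam mu hlam hmu Z hmeas hpmf hindep Δ ε hε
end

section
/- Fix an integer q ≥ 2 and let u(t) = (Σ_{a=0}^{q−1} a e^{at})/(Σ_{k=0}^{q−1} e^{kt}) for t ∈ ℝ. Then for all t ∈ ℝ, the second derivative satisfies |u″(t)| ≤ (q−1)³. Consequently, in the generalized β-model with F_i(α) = d̄_i − Σ_{j≠i} u(α_i + α_j), the second partial derivatives satisfy |∂²F_i/∂α_i²| ≤ (q−1)³(n−1) and |∂²F_i/∂α_j∂α_i| ≤ (q−1)³ for j ≠ i, at every α ∈ ℝⁿ. -/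
open Finset

/-- The mean function of the generalized β-model edge-weight distribution:
`u(t) = (Σ_{a=0}^{q-1} a e^{a t}) / (Σ_{k=0}^{q-1} e^{k t})`. -/
noncomputable def uq (q : ℕ) (t : ℝ) : ℝ :=
  (∑ a ∈ Finset.range q, (a : ℝ) * Real.exp (a * t)) /
    ∑ k ∈ Finset.range q, Real.exp (k * t)

/-- Partial derivative of `f : (Fin n → ℝ) → ℝ` in the `j`-th coordinate at `x`. -/
noncomputable def pderiv' {n : ℕ} (j : Fin n) (f : (Fin n → ℝ) → ℝ) (x : Fin n → ℝ) : ℝ :=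
  deriv (fun s => f (Function.update x j s)) (x j)

/-!
`u` is the mean of the exponential family `P(a) ∝ e^{a t}` on `{0, …, q-1}`. Writing `m_k(t)` for its
`k`-th moment, `m_k' = m_{k+1} - m_k m_1`, so `u' = m_2 - m_1²` is the variance and
`u'' = m_3 - 3 m_1 m_2 + 2 m_1³ = E (a - u)³` is the third central moment. As `a` and its mean `u`
both lie in `[0, q-1]`, `|a - u| ≤ q - 1`, whence `|u''| ≤ (q-1)³`. Each `F_i` is `d̄_i` minus a sum
of translates `u (α_i + α_j)`, so `∂²F_i/∂α_i²` is a sum of `n - 1` values of `-u''` and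
`∂²F_i/∂α_j∂α_i` is a single one.
-/

section TiltedMoments

variable {ι : Type*} (s : Finset ι) (x : ι → ℝ)

noncomputable def expMomentSum (m : ℕ) (t : ℝ) : ℝ :=
  ∑ a ∈ s, x a ^ m * Real.exp (x a * t)

noncomputable def tiltedMoment (m : ℕ) (t : ℝ) : ℝ :=
  expMomentSum s x m t / expMomentSum s x 0 t

noncomputable def tiltedCentralMoment (m : ℕ) (t : ℝ) : ℝ :=
  (∑ a ∈ s, (x a - tiltedMoment s x 1 t) ^ m * Real.exp (x a * t)) / expMomentSum s x 0 t

variable {s}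

theorem hasDerivAt_expMomentSum (m : ℕ) (t : ℝ) :
    HasDerivAt (expMomentSum s x m) (expMomentSum s x (m + 1) t) t := by
  refine HasDerivAt.fun_sum fun a _ => ?_
  have h := (((hasDerivAt_id t).const_mul (x a)).exp).const_mul (x a ^ m)
  exact h.congr_deriv (by simp only [id, mul_one]; ring)

theorem expMomentSum_zero_pos (hs : s.Nonempty) (t : ℝ) : 0 < expMomentSum s x 0 t :=
  sum_pos (fun a _ => by simpa using Real.exp_pos (x a * t)) hs

theorem hasDerivAt_tiltedMoment (hs : s.Nonempty) (m : ℕ) (t : ℝ) :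
    HasDerivAt (tiltedMoment s x m)
      (tiltedMoment s x (m + 1) t - tiltedMoment s x m t * tiltedMoment s x 1 t) t := by
  have hZ := (expMomentSum_zero_pos x hs t).ne'
  refine ((hasDerivAt_expMomentSum x m t).div (hasDerivAt_expMomentSum x 0 t) hZ).congr_deriv ?_
  simp only [tiltedMoment]
  field_simp

theorem deriv_tiltedMoment (hs : s.Nonempty) (m : ℕ) :
    deriv (tiltedMoment s x m) =
      fun t => tiltedMoment s x (m + 1) t - tiltedMoment s x m t * tiltedMoment s x 1 t :=
  funext fun t => (hasDerivAt_tiltedMoment x hs m t).deriv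

theorem tiltedCentralMoment_three (hs : s.Nonempty) (t : ℝ) :
    tiltedCentralMoment s x 3 t = tiltedMoment s x 3 t
      - 3 * tiltedMoment s x 1 t * tiltedMoment s x 2 t + 2 * tiltedMoment s x 1 t ^ 3 := by
  set μ := tiltedMoment s x 1 t
  have hexpand : ∑ a ∈ s, (x a - μ) ^ 3 * Real.exp (x a * t) = expMomentSum s x 3 t
      - 3 * μ * expMomentSum s x 2 t + 3 * μ ^ 2 * expMomentSum s x 1 t
      - μ ^ 3 * expMomentSum s x 0 t := by
    simp only [expMomentSum, mul_sum, ← sum_sub_distrib, ← sum_add_distrib]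
    exact sum_congr rfl fun a _ => by ring
  have hμ : μ = expMomentSum s x 1 t / expMomentSum s x 0 t := rfl
  have hZ := (expMomentSum_zero_pos x hs t).ne'
  rw [tiltedCentralMoment, hexpand, tiltedMoment, tiltedMoment, hμ]
  field_simp
  ring

theorem hasDerivAt_deriv_tiltedMoment_one (hs : s.Nonempty) (t : ℝ) :
    HasDerivAt (deriv (tiltedMoment s x 1)) (tiltedCentralMoment s x 3 t) t := by
  rw [deriv_tiltedMoment x hs, tiltedCentralMoment_three x hs]
  have h1 := hasDerivAt_tiltedMoment x hs 1 t
  exact ((hasDerivAt_tiltedMoment x hs 2 t).sub (h1.mul h1)).congr_deriv (by ring)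

theorem tiltedMoment_one_eq_centerMass (t : ℝ) :
    tiltedMoment s x 1 t = s.centerMass (fun a => Real.exp (x a * t)) x := by
  simp [tiltedMoment, expMomentSum, centerMass, div_eq_inv_mul, mul_comm]

theorem tiltedMoment_one_mem_Icc (hs : s.Nonempty) {lo hi : ℝ} (hx : ∀ a ∈ s, x a ∈ Set.Icc lo hi)
    (t : ℝ) : tiltedMoment s x 1 t ∈ Set.Icc lo hi := by
  rw [tiltedMoment_one_eq_centerMass]
  refine (convex_Icc lo hi).centerMass_mem (fun a _ => (Real.exp_pos _).le) ?_ hx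
  simpa [expMomentSum] using expMomentSum_zero_pos x hs t

theorem abs_tiltedCentralMoment_le (hs : s.Nonempty) {lo hi : ℝ}
    (hx : ∀ a ∈ s, x a ∈ Set.Icc lo hi) (m : ℕ) (t : ℝ) :
    |tiltedCentralMoment s x m t| ≤ (hi - lo) ^ m := by
  have hZ := expMomentSum_zero_pos x hs t
  obtain ⟨hμlo, hμhi⟩ := tiltedMoment_one_mem_Icc x hs hx t
  rw [tiltedCentralMoment, abs_div, abs_of_pos hZ, div_le_iff₀ hZ]
  calc |∑ a ∈ s, (x a - tiltedMoment s x 1 t) ^ m * Real.exp (x a * t)|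
      ≤ ∑ a ∈ s, |(x a - tiltedMoment s x 1 t) ^ m * Real.exp (x a * t)| :=
        abs_sum_le_sum_abs _ _
    _ ≤ ∑ a ∈ s, (hi - lo) ^ m * (x a ^ 0 * Real.exp (x a * t)) := by
        refine sum_le_sum fun a ha => ?_
        obtain ⟨hlo, hhi⟩ := hx a ha
        rw [abs_mul, abs_pow, abs_of_pos (Real.exp_pos _), pow_zero, one_mul]
        gcongr
        exact abs_sub_le_iff.2 ⟨by linarith, by linarith⟩
    _ = (hi - lo) ^ m * expMomentSum s x 0 t := by rw [expMomentSum, mul_sum]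

end TiltedMoments

theorem uq_eq_tiltedMoment (q : ℕ) : uq q = tiltedMoment (range q) (fun a => (a : ℝ)) 1 := by
  funext t
  simp [uq, tiltedMoment, expMomentSum]

section PairSum

variable {n : ℕ}

noncomputable def pairSum (g : ℝ → ℝ) (i : Fin n) (x : Fin n → ℝ) : ℝ :=
  ∑ k ∈ univ.erase i, g (x i + x k)

theorem pderiv'_const_sub (j : Fin n) (c : ℝ) (f : (Fin n → ℝ) → ℝ) :
    pderiv' j (fun x => c - f x) = fun x => -pderiv' j f x :=
  funext fun _ => deriv_const_sub c

theorem pderiv'_neg (j : Fin n) (f : (Fin n → ℝ) → ℝ) (x : Fin n → ℝ) :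
    pderiv' j (fun x => -f x) x = -pderiv' j f x :=
  deriv.fun_neg

theorem pderiv'_pairSum_self {g : ℝ → ℝ} (hg : Differentiable ℝ g) (i : Fin n) :
    pderiv' i (pairSum g i) = pairSum (deriv g) i := by
  funext x
  have hline : (fun s => pairSum g i (Function.update x i s))
      = fun s => ∑ k ∈ univ.erase i, g (s + x k) := by
    funext s
    refine sum_congr rfl fun k hk => ?_
    rw [Function.update_self, Function.update_of_ne (ne_of_mem_erase hk)]
  rw [pderiv', hline]
  exact (HasDerivAt.fun_sum fun k _ => (hg _).hasDerivAt.comp_add_const (x i) (x k)).deriv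

theorem pderiv'_pairSum_of_ne (g : ℝ → ℝ) {i j : Fin n} (hji : j ≠ i) (x : Fin n → ℝ) :
    pderiv' j (pairSum g i) x = deriv g (x i + x j) := by
  have hline : (fun s => pairSum g i (Function.update x j s))
      = fun s => g (x i + s) + ∑ k ∈ (univ.erase i).erase j, g (x i + x k) := by
    funext s
    rw [pairSum, ← add_sum_erase _ _ (mem_erase.2 ⟨hji, mem_univ j⟩),
      Function.update_of_ne hji.symm, Function.update_self]
    congr 1
    refine sum_congr rfl fun k hk => ?_
    rw [Function.update_of_ne (ne_of_mem_erase hk)]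
  rw [pderiv', hline, deriv_add_const, deriv_comp_const_add]

theorem abs_pairSum_le {g : ℝ → ℝ} {C : ℝ} (hg : ∀ t, |g t| ≤ C) (i : Fin n) (x : Fin n → ℝ) :
    |pairSum g i x| ≤ C * ((n : ℝ) - 1) :=
  calc |pairSum g i x| ≤ ∑ k ∈ univ.erase i, |g (x i + x k)| := abs_sum_le_sum_abs _ _
    _ ≤ ∑ _k ∈ univ.erase i, C := sum_le_sum fun k _ => hg _
    _ = C * ((n : ℝ) - 1) := by
        rw [sum_const, card_erase_of_mem (mem_univ i), card_univ, Fintype.card_fin, nsmul_eq_mul,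
          Nat.cast_pred i.pos, mul_comm]

end PairSum

/-- `|u″(t)| ≤ (q-1)³` for all `t`; consequently, for
`F_i(α) = d̄_i - Σ_{j≠i} u(α_i + α_j)`, the second partial derivatives satisfy
`|∂²F_i/∂α_i²| ≤ (q-1)³(n-1)` and `|∂²F_i/∂α_j∂α_i| ≤ (q-1)³` for `j ≠ i`, at every `α`. -/
theorem second_derivative_bounds (q : ℕ) (hq : 2 ≤ q) :
    (∀ t : ℝ, |deriv (deriv (uq q)) t| ≤ ((q : ℝ) - 1) ^ 3) ∧
    ∀ (n : ℕ) (dbar : Fin n → ℝ) (i : Fin n) (α : Fin n → ℝ),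
      |pderiv' i (pderiv' i
          (fun x => dbar i - ∑ j ∈ Finset.univ.erase i, uq q (x i + x j))) α|
        ≤ ((q : ℝ) - 1) ^ 3 * ((n : ℝ) - 1) ∧
      ∀ j : Fin n, j ≠ i →
        |pderiv' j (pderiv' i
            (fun x => dbar i - ∑ j' ∈ Finset.univ.erase i, uq q (x i + x j'))) α|
          ≤ ((q : ℝ) - 1) ^ 3 := by
  have hs : (range q).Nonempty := nonempty_range_iff.2 (by omega)
  have hrange : ∀ a ∈ range q, (a : ℝ) ∈ Set.Icc 0 ((q : ℝ) - 1) := fun a ha =>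
    ⟨a.cast_nonneg, by have := mem_range.1 ha; rw [le_sub_iff_add_le]; exact_mod_cast this⟩
  have hu'' : ∀ t, HasDerivAt (deriv (uq q)) (tiltedCentralMoment (range q) (↑) 3 t) t := by
    rw [uq_eq_tiltedMoment]
    exact hasDerivAt_deriv_tiltedMoment_one _ hs
  have hbound : ∀ t, |deriv (deriv (uq q)) t| ≤ ((q : ℝ) - 1) ^ 3 := fun t => by
    simpa [(hu'' t).deriv] using abs_tiltedCentralMoment_le _ hs hrange 3 t
  have hdiff : Differentiable ℝ (uq q) := by
    rw [uq_eq_tiltedMoment]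
    exact fun t => (hasDerivAt_tiltedMoment _ hs 1 t).differentiableAt
  refine ⟨hbound, fun n dbar i α => ?_⟩
  have hF : pderiv' i (fun x => dbar i - pairSum (uq q) i x) =
      fun x => -pairSum (deriv (uq q)) i x := by
    rw [pderiv'_const_sub, pderiv'_pairSum_self hdiff]
  refine ⟨?_, fun j hji => ?_⟩
  · change |pderiv' i (pderiv' i (fun x => dbar i - pairSum (uq q) i x)) α| ≤ _
    rw [hF, pderiv'_neg, pderiv'_pairSum_self fun t => (hu'' t).differentiableAt, abs_neg]
    exact abs_pairSum_le hbound i α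
  · change |pderiv' j (pderiv' i (fun x => dbar i - pairSum (uq q) i x)) α| ≤ _
    rw [hF, pderiv'_neg, pderiv'_pairSum_of_ne _ hji, abs_neg]
    exact hbound _
end

section
/- In the generalized β-model, the Jacobian F′ of the system F(α) = (F_1(α),…,F_n(α))ᵀ with F_i(α) = d̄_i − Σ_{j≠i} u(α_i + α_j) is Lipschitz continuous with respect to the max norm with Lipschitz constant κ = 4(q−1)³(n−1): for all x, y ∈ ℝⁿ and all v ∈ ℝⁿ, ‖(F′(x) − F′(y))v‖_∞ ≤ 4(q−1)³(n−1)‖x − y‖_∞‖v‖_∞. -/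
/-!
For the law `P(k) ∝ e^{kt}` on `{0, …, q-1}`, `u(t)` is the mean, `u'(t)` the variance and `u''(t)`
the third central moment. Every value lies within `q - 1` of the mean, so `|u''| ≤ (q-1)³` and `u'`
is `(q-1)³`-Lipschitz.

The Jacobian is minus the signless Laplacian `D + W` of the weights `w_ij = u'(α_i + α_j)`, and this
matrix is linear in `w`. Row `i` of `D + W` has absolute sum at most `2 Σ_{j≠i} |w_ij|`, while
`|u'(x_i + x_j) - u'(y_i + y_j)| ≤ 2(q-1)³‖x - y‖_∞`; hence the constant `4(q-1)³(n-1)`.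
-/

open Finset

section

open Real Matrix

noncomputable def expMoment (q m : ℕ) (t : ℝ) : ℝ :=
  ∑ k ∈ range q, (k : ℝ) ^ m * exp (k * t)

theorem hasDerivAt_expMoment (q m : ℕ) (t : ℝ) :
    HasDerivAt (expMoment q m) (expMoment q (m + 1) t) t := by
  refine HasDerivAt.fun_sum fun k _ => ?_
  have hlin : HasDerivAt (fun t : ℝ => (k : ℝ) * t) k t := by
    simpa using (hasDerivAt_id t).const_mul (k : ℝ)
  exact (hlin.exp.const_mul _).congr_deriv (by ring)

theorem cast_le_sub_one_of_mem_range {q k : ℕ} (hk : k ∈ range q) : (k : ℝ) ≤ q - 1 := by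
  have : (k : ℝ) + 1 ≤ q := by exact_mod_cast mem_range.mp hk
  linarith

theorem expMoment_zero_pos {q : ℕ} (hq : 1 ≤ q) (t : ℝ) : 0 < expMoment q 0 t :=
  sum_pos (fun k _ => by positivity) (nonempty_range_iff.mpr (by omega))

theorem expMoment_one_nonneg (q : ℕ) (t : ℝ) : 0 ≤ expMoment q 1 t :=
  sum_nonneg fun k _ => by positivity

theorem expMoment_one_le (q : ℕ) (t : ℝ) :
    expMoment q 1 t ≤ ((q : ℝ) - 1) * expMoment q 0 t := by
  rw [expMoment, expMoment, mul_sum]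
  refine sum_le_sum fun k hk => ?_
  simp only [pow_one, pow_zero, one_mul]
  exact mul_le_mul_of_nonneg_right (cast_le_sub_one_of_mem_range hk) (exp_pos _).le

theorem uq_eq_div (q : ℕ) : uq q = fun t => expMoment q 1 t / expMoment q 0 t := by
  ext t
  simp [uq, expMoment]

theorem uq_mem_Icc {q : ℕ} (hq : 1 ≤ q) (t : ℝ) : uq q t ∈ Set.Icc 0 ((q : ℝ) - 1) := by
  have h0 := expMoment_zero_pos hq t
  rw [uq_eq_div]
  exact ⟨div_nonneg (expMoment_one_nonneg q t) h0.le,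
    (div_le_iff₀ h0).mpr (expMoment_one_le q t)⟩

theorem abs_sub_uq_le {q k : ℕ} (hk : k ∈ range q) (t : ℝ) : |(k : ℝ) - uq q t| ≤ q - 1 := by
  obtain ⟨hu0, huq⟩ := uq_mem_Icc (Nat.one_le_of_lt (mem_range.mp hk)) t
  rw [abs_le]
  constructor <;> linarith [cast_le_sub_one_of_mem_range hk, k.cast_nonneg (α := ℝ)]

theorem hasDerivAt_uq {q : ℕ} (hq : 1 ≤ q) (t : ℝ) :
    HasDerivAt (uq q)
      ((expMoment q 2 t * expMoment q 0 t - expMoment q 1 t ^ 2) / expMoment q 0 t ^ 2) t := by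
  rw [uq_eq_div]
  exact ((hasDerivAt_expMoment q 1 t).div (hasDerivAt_expMoment q 0 t)
    (expMoment_zero_pos hq t).ne').congr_deriv (by ring)

theorem sum_exp_mul_sub_pow_three (q : ℕ) (t c : ℝ) :
    ∑ k ∈ range q, exp (k * t) * ((k : ℝ) - c) ^ 3 =
      expMoment q 3 t - 3 * c * expMoment q 2 t + 3 * c ^ 2 * expMoment q 1 t
        - c ^ 3 * expMoment q 0 t := by
  simp only [expMoment, mul_sum, ← sum_sub_distrib, ← sum_add_distrib]
  exact sum_congr rfl fun k _ => by ring

theorem hasDerivAt_deriv_uq {q : ℕ} (hq : 1 ≤ q) (t : ℝ) :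
    HasDerivAt (deriv (uq q))
      ((∑ k ∈ range q, exp (k * t) * ((k : ℝ) - uq q t) ^ 3) / expMoment q 0 t) t := by
  have h0 := (expMoment_zero_pos hq t).ne'
  have hderiv : deriv (uq q) = fun t =>
      (expMoment q 2 t * expMoment q 0 t - expMoment q 1 t ^ 2) / expMoment q 0 t ^ 2 :=
    funext fun t => (hasDerivAt_uq hq t).deriv
  rw [hderiv, sum_exp_mul_sub_pow_three, uq_eq_div]
  refine ((((hasDerivAt_expMoment q 2 t).mul (hasDerivAt_expMoment q 0 t)).sub
    ((hasDerivAt_expMoment q 1 t).pow 2)).div ((hasDerivAt_expMoment q 0 t).pow 2)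
    (pow_ne_zero 2 h0)).congr_deriv ?_
  simp only [Pi.pow_apply, Pi.mul_apply, Pi.sub_apply]
  field_simp
  ring

theorem abs_deriv_deriv_uq_le {q : ℕ} (hq : 1 ≤ q) (t : ℝ) :
    |deriv (deriv (uq q)) t| ≤ ((q : ℝ) - 1) ^ 3 := by
  have h0 := expMoment_zero_pos hq t
  rw [(hasDerivAt_deriv_uq hq t).deriv, abs_div, abs_of_pos h0, div_le_iff₀ h0]
  calc |∑ k ∈ range q, exp (k * t) * ((k : ℝ) - uq q t) ^ 3|
      ≤ ∑ k ∈ range q, exp (k * t) * ((q : ℝ) - 1) ^ 3 := by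
        refine (abs_sum_le_sum_abs _ _).trans (sum_le_sum fun k hk => ?_)
        rw [abs_mul, abs_of_pos (exp_pos _), abs_pow]
        gcongr
        exact abs_sub_uq_le hk t
    _ = ((q : ℝ) - 1) ^ 3 * expMoment q 0 t := by
        simp [expMoment, mul_sum, mul_comm]

theorem abs_deriv_uq_sub_le {q : ℕ} (hq : 1 ≤ q) (s t : ℝ) :
    |deriv (uq q) s - deriv (uq q) t| ≤ ((q : ℝ) - 1) ^ 3 * |s - t| :=
  convex_univ.norm_image_sub_le_of_norm_deriv_le
    (fun x _ => (hasDerivAt_deriv_uq hq x).differentiableAt)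
    (fun x _ => abs_deriv_deriv_uq_le hq x) (Set.mem_univ t) (Set.mem_univ s)

variable {ι : Type*} [Fintype ι]

theorem norm_mulVec_le_of_sum_abs_le (A : Matrix ι ι ℝ) {K : ℝ}
    (hA : ∀ i, ∑ j, |A i j| ≤ K) (v : ι → ℝ) : ‖A *ᵥ v‖ ≤ K * ‖v‖ := by
  rcases isEmpty_or_nonempty ι with hι | ⟨⟨i₀⟩⟩
  · simp [Subsingleton.elim v 0]
  have hK : 0 ≤ K := (sum_nonneg fun j _ => abs_nonneg (A i₀ j)).trans (hA i₀)
  refine (pi_norm_le_iff_of_nonneg (by positivity)).mpr fun i => ?_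
  calc ‖(A *ᵥ v) i‖ = |∑ j, A i j * v j| := rfl
    _ ≤ ∑ j, |A i j| * ‖v‖ := by
        refine (abs_sum_le_sum_abs _ _).trans (sum_le_sum fun j _ => ?_)
        rw [abs_mul]
        exact mul_le_mul_of_nonneg_left (norm_le_pi_norm v j) (abs_nonneg _)
    _ ≤ K * ‖v‖ := by
        rw [← sum_mul]
        exact mul_le_mul_of_nonneg_right (hA i) (norm_nonneg v)

theorem abs_add_sub_add_le_two_mul_norm_sub (x y : ι → ℝ) (i j : ι) :
    |(x i + x j) - (y i + y j)| ≤ 2 * ‖x - y‖ := by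
  have hi : |x i - y i| ≤ ‖x - y‖ := norm_le_pi_norm (x - y) i
  have hj : |x j - y j| ≤ ‖x - y‖ := norm_le_pi_norm (x - y) j
  calc |(x i + x j) - (y i + y j)| = |(x i - y i) + (x j - y j)| := by ring_nf
    _ ≤ 2 * ‖x - y‖ := (abs_add_le _ _).trans (by linarith)

variable [DecidableEq ι]

def signlessLaplacian (w : ι → ι → ℝ) : Matrix ι ι ℝ :=
  Matrix.of fun i j => if i = j then ∑ j' ∈ univ.erase i, w i j' else w i j

theorem signlessLaplacian_sub (w w' : ι → ι → ℝ) :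
    signlessLaplacian w - signlessLaplacian w' = signlessLaplacian (w - w') := by
  ext i j
  by_cases hij : i = j <;> simp [signlessLaplacian, hij, sum_sub_distrib]

theorem sum_abs_signlessLaplacian_le (w : ι → ι → ℝ) (i : ι) :
    ∑ j, |signlessLaplacian w i j| ≤ 2 * ∑ j ∈ univ.erase i, |w i j| := by
  have hoff : ∀ j ∈ univ.erase i, signlessLaplacian w i j = w i j := fun j hj => by
    simp [signlessLaplacian, (ne_of_mem_erase hj).symm]
  rw [← add_sum_erase _ _ (mem_univ i), sum_congr rfl fun j hj => by rw [hoff j hj]]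
  have hdiag : |signlessLaplacian w i i| ≤ ∑ j ∈ univ.erase i, |w i j| := by
    simpa [signlessLaplacian] using abs_sum_le_sum_abs (w i) (univ.erase i)
  linarith

theorem norm_signlessLaplacian_mulVec_le (w : ι → ι → ℝ) {M : ℝ} (hw : ∀ i j, |w i j| ≤ M)
    (v : ι → ℝ) :
    ‖signlessLaplacian w *ᵥ v‖ ≤ 2 * ((Fintype.card ι : ℝ) - 1) * M * ‖v‖ := by
  refine norm_mulVec_le_of_sum_abs_le _ (fun i => ?_) v
  calc ∑ j, |signlessLaplacian w i j| ≤ 2 * ∑ j ∈ univ.erase i, |w i j| :=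
        sum_abs_signlessLaplacian_le w i
    _ ≤ 2 * ∑ _j ∈ univ.erase i, M := by gcongr with j; exact hw i j
    _ = 2 * ((Fintype.card ι : ℝ) - 1) * M := by
        rw [sum_erase_eq_sub (mem_univ i), sum_const, card_univ, nsmul_eq_mul]
        ring

end

/-- The Jacobian `J = F′` of the system `F_i(α) = d̄_i - Σ_{j≠i} u(α_i + α_j)`,
with entries `∂F_i/∂α_i = -Σ_{j≠i} u′(α_i+α_j)` and `∂F_i/∂α_j = -u′(α_i+α_j)` for `j ≠ i`,
is Lipschitz continuous w.r.t. the max norm (the sup norm on `Fin n → ℝ`) with constant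
`κ = 4(q-1)³(n-1)`. -/
theorem jacobian_lipschitz (q n : ℕ) (hq : 2 ≤ q)
    (J : (Fin n → ℝ) → Matrix (Fin n) (Fin n) ℝ)
    (hJ : ∀ (α : Fin n → ℝ) (i j : Fin n),
      J α i j = if i = j then -∑ j' ∈ Finset.univ.erase i, deriv (uq q) (α i + α j')
                else -deriv (uq q) (α i + α j)) :
    ∀ x y v : Fin n → ℝ,
      ‖(J x - J y).mulVec v‖ ≤ 4 * ((q : ℝ) - 1) ^ 3 * ((n : ℝ) - 1) * ‖x - y‖ * ‖v‖ := by
  intro x y v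
  have hq1 : 1 ≤ q := by omega
  set w : (Fin n → ℝ) → Fin n → Fin n → ℝ := fun α i j => deriv (uq q) (α i + α j)
  have hJw : ∀ α, J α = -signlessLaplacian (w α) := fun α => by
    ext i j
    by_cases hij : i = j <;> simp [hJ, signlessLaplacian, w, hij]
  have hw : ∀ i j, |(w y - w x) i j| ≤ 2 * ((q : ℝ) - 1) ^ 3 * ‖x - y‖ := fun i j => by
    have hC : (0 : ℝ) ≤ ((q : ℝ) - 1) ^ 3 := pow_nonneg (sub_nonneg.mpr (by exact_mod_cast hq1)) 3
    calc |(w y - w x) i j| = |deriv (uq q) (x i + x j) - deriv (uq q) (y i + y j)| :=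
          abs_sub_comm _ _
      _ ≤ ((q : ℝ) - 1) ^ 3 * |(x i + x j) - (y i + y j)| := abs_deriv_uq_sub_le hq1 _ _
      _ ≤ ((q : ℝ) - 1) ^ 3 * (2 * ‖x - y‖) := by
          gcongr; exact abs_add_sub_add_le_two_mul_norm_sub x y i j
      _ = 2 * ((q : ℝ) - 1) ^ 3 * ‖x - y‖ := by ring
  calc ‖(J x - J y).mulVec v‖ = ‖(signlessLaplacian (w y - w x)).mulVec v‖ := by
        rw [hJw, hJw, neg_sub_neg, signlessLaplacian_sub]
    _ ≤ 2 * ((Fintype.card (Fin n) : ℝ) - 1) * (2 * ((q : ℝ) - 1) ^ 3 * ‖x - y‖) * ‖v‖ :=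
        norm_signlessLaplacian_mulVec_le _ hw v
    _ = 4 * ((q : ℝ) - 1) ^ 3 * ((n : ℝ) - 1) * ‖x - y‖ * ‖v‖ := by
        rw [Fintype.card_fin]; ring
end
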